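/- arXiv:2508.01238 — 6 statements merged into one kernel-verified Lean document; each statement's English description precedes it below -/
import Mathlib

section
/- Every conformal Killing field has matrix-valued derivative data of the following explicit form, and conversely all such data arise this way: (i) {dev(grad v) : v ∈ CK} = {x ↦ mskw(w(x)) : w ∈ RM}; (ii) {sym(grad v) : v ∈ CK} = {x ↦ p(x)·I : p ∈ P₁}, where I is the 3×3 identity matrix; (iii) {div v : v ∈ CK} = P₁. In particular, for v(x) = (x·x)a − 2(a·x)x + b x + c × x + d one has grad v(x) = 2 mskw(x × a) + mskw(c) + (b − 2 a·x) I. -/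
noncomputable section

open Matrix

/-- Vectors in ℝ³. -/
abbrev V3 := Fin 3 → ℝ
/-- 3×3 real matrices. -/
abbrev M3 := Matrix (Fin 3) (Fin 3) ℝ

/-- Partial derivative ∂ᵢ of a scalar field. -/
def pd (i : Fin 3) (f : V3 → ℝ) : V3 → ℝ :=
  fun x => fderiv ℝ f x (Pi.single i 1)

/-- Gradient matrix of a vector field: (grad v)_{ij} = ∂ⱼ vᵢ. -/
def vgrad (v : V3 → V3) : V3 → M3 :=
  fun x => Matrix.of fun i j => pd j (fun y => v y i) x

/-- Divergence of a vector field. -/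
def vdiv (v : V3 → V3) : V3 → ℝ :=
  fun x => ∑ i, pd i (fun y => v y i) x

/-- Cross product on ℝ³. -/
def cross (a b : V3) : V3 :=
  fun i => a (i + 1) * b (i + 2) - a (i + 2) * b (i + 1)

/-- Curl of a vector field. -/
def vcurl (v : V3 → V3) : V3 → V3 :=
  fun x i => pd (i + 1) (fun y => v y (i + 2)) x - pd (i + 2) (fun y => v y (i + 1)) x

/-- Row-wise curl of a matrix field. -/
def mcurl (τ : V3 → M3) : V3 → M3 :=
  fun x => Matrix.of fun i j =>
    pd (j + 1) (fun y => τ y i (j + 2)) x - pd (j + 2) (fun y => τ y i (j + 1)) x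

/-- Row-wise divergence of a matrix field. -/
def mdiv (τ : V3 → M3) : V3 → V3 :=
  fun x i => ∑ j, pd j (fun y => τ y i j) x

/-- Symmetric part of a matrix. -/
def msym (A : M3) : M3 := (1 / 2 : ℝ) • (A + Aᵀ)

/-- Deviatoric (trace-free) part of a matrix. -/
def devm (A : M3) : M3 := A - ((1 / 3 : ℝ) * A.trace) • (1 : M3)

/-- The skew-symmetric matrix associated to a vector: mskw(ω) y = ω × y. -/
def mskw (w : V3) : M3 := !![0, -w 2, w 1; w 2, 0, -w 0; -w 1, w 0, 0]

/-- vskw(A) := mskw⁻¹(skw A). -/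
def vskw (A : M3) : V3 :=
  (1 / 2 : ℝ) • ![A 2 1 - A 1 2, A 0 2 - A 2 0, A 1 0 - A 0 1]

/-- S⁻¹(A) := Aᵀ − (1/2)(tr A)I. -/
def Sinv (A : M3) : M3 := Aᵀ - ((1 / 2 : ℝ) * A.trace) • (1 : M3)

/-- S(A) := Aᵀ − (tr A)I. -/
def Sop (A : M3) : M3 := Aᵀ - A.trace • (1 : M3)

/-- Incompatibility operator inc τ := curl (S⁻¹ (curl τ)). -/
def inc (τ : V3 → M3) : V3 → M3 := mcurl fun x => Sinv (mcurl τ x)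

/-- Linearized Cotton–York operator cott τ := curl (S⁻¹ (inc τ)). -/
def cott (τ : V3 → M3) : V3 → M3 := mcurl fun x => Sinv (inc τ x)

/-- Hessian matrix of a scalar field. -/
def hess (u : V3 → ℝ) : V3 → M3 :=
  fun x => Matrix.of fun i j => pd i (pd j u) x

/-- Euclidean dot product on ℝ³. -/
def dotp (a b : V3) : ℝ := ∑ i, a i * b i

/-- Smoothness of a vector field (componentwise C^∞). -/
def SmoothV (v : V3 → V3) : Prop := ∀ i, ContDiff ℝ (⊤ : ℕ∞) fun x => v x i

/-- Smoothness of a matrix field (entrywise C^∞). -/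
def SmoothM (τ : V3 → M3) : Prop := ∀ i j, ContDiff ℝ (⊤ : ℕ∞) fun x => τ x i j

/-- Conformal Killing fields. -/
def CK (v : V3 → V3) : Prop :=
  ∃ (a c d : V3) (b : ℝ), ∀ x,
    v x = dotp x x • a - (2 * dotp a x) • x + b • x + cross c x + d

/-- Rigid motions. -/
def RM (v : V3 → V3) : Prop := ∃ a b : V3, ∀ x, v x = cross a x + b

/-- Lowest-order Raviart–Thomas fields. -/
def RT (v : V3 → V3) : Prop := ∃ (a : V3) (b : ℝ), ∀ x, v x = a + b • x

/-- Polynomial scalar functions of total degree at most k. -/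
def PolyLe (k : ℕ) (f : V3 → ℝ) : Prop :=
  ∃ p : MvPolynomial (Fin 3) ℝ, p.totalDegree ≤ k ∧ ∀ x, f x = MvPolynomial.eval x p

/-- Matrix fields with entries in P_k and values symmetric traceless. -/
def PolyLeST (k : ℕ) (τ : V3 → M3) : Prop :=
  (∀ i j, PolyLe k fun x => τ x i j) ∧ (∀ x, (τ x)ᵀ = τ x) ∧ ∀ x, (τ x).trace = 0


def E3 (j : Fin 3) : V3 →L[ℝ] ℝ := ContinuousLinearMap.proj j

lemma hE3 (j : Fin 3) (x : V3) : HasFDerivAt (fun y : V3 => y j) (E3 j) x :=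
  (E3 j).hasFDerivAt

lemma hasF (i : Fin 3) (a c : V3) (b D : ℝ) (x : V3) :
    HasFDerivAt (fun y : V3 => (∑ k, y k * y k) * a i - (2 * ∑ k, a k * y k) * y i
        + b * y i + (c (i+1) * y (i+2) - c (i+2) * y (i+1)) + D)
      ((a i) • (∑ k, (x k • E3 k + x k • E3 k))
        - ((2 * ∑ k, a k * x k) • E3 i + x i • ((2:ℝ) • ∑ k, a k • E3 k))
        + b • E3 i + ((c (i+1)) • E3 (i+2) - (c (i+2)) • E3 (i+1))) x := by
  have hsq : HasFDerivAt (fun y : V3 => ∑ k, y k * y k) (∑ k, (x k • E3 k + x k • E3 k)) x :=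
    HasFDerivAt.fun_sum fun k _ => (hE3 k x).mul (hE3 k x)
  have hlin : HasFDerivAt (fun y : V3 => ∑ k, a k * y k) (∑ k, a k • E3 k) x :=
    HasFDerivAt.fun_sum fun k _ => (hE3 k x).const_mul (a k)
  exact (((hsq.mul_const (a i)).sub
      ((hlin.const_mul 2).mul (hE3 i x))).add
      ((hE3 i x).const_mul b)).add
      (((hE3 (i+2) x).const_mul (c (i+1))).sub
      ((hE3 (i+1) x).const_mul (c (i+2)))) |>.add_const D

lemma pd_formula (i j : Fin 3) (a c : V3) (b D : ℝ) (x : V3) :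
    pd j (fun y : V3 => (∑ k, y k * y k) * a i - (2 * ∑ k, a k * y k) * y i
        + b * y i + (c (i+1) * y (i+2) - c (i+2) * y (i+1)) + D) x
      = a i * (2 * x j) - ((2 * ∑ k, a k * x k) * (if i = j then 1 else 0) + x i * (2 * a j))
        + b * (if i = j then 1 else 0)
        + (c (i+1) * (if i+2 = j then 1 else 0) - c (i+2) * (if i+1 = j then 1 else 0)) := by
  have h := (hasF i a c b D x).fderiv
  simp only [pd, h]
  simp only [ContinuousLinearMap.add_apply, ContinuousLinearMap.sub_apply,
    ContinuousLinearMap.smul_apply, ContinuousLinearMap.coe_sum', Finset.sum_apply,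
    E3, ContinuousLinearMap.proj_apply, Pi.single_apply, smul_eq_mul, mul_ite, ite_mul,
    mul_zero, zero_mul, Finset.sum_add_distrib, Finset.sum_ite_eq, Finset.sum_ite_eq', Finset.mem_univ, if_true]
  ring


lemma mskw_add2 (u c : V3) : (2:ℝ) • mskw u + mskw c = mskw ((2:ℝ) • u + c) := by
  ext i j
  fin_cases i <;> fin_cases j <;>
    simp [mskw, Pi.smul_apply, smul_eq_mul] <;> ring

lemma mskw_transpose (u : V3) : (mskw u)ᵀ = -(mskw u) := by
  ext i j
  fin_cases i <;> fin_cases j <;> simp [mskw, Matrix.transpose_apply]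

lemma trace_mskw (u : V3) : (mskw u).trace = 0 := by
  simp [mskw, Matrix.trace, Matrix.diag, Fin.sum_univ_three]

/-- The master gradient computation. -/
lemma grad_CK (a c d : V3) (b : ℝ) (x : V3) :
    vgrad (fun y => dotp y y • a - (2 * dotp a y) • y + b • y + cross c y + d) x =
      (2 : ℝ) • mskw (cross x a) + mskw c + (b - 2 * dotp a x) • (1 : M3) := by
  ext i j
  have hfun : (fun y : V3 => (dotp y y • a - (2 * dotp a y) • y + b • y + cross c y + d) i)
      = fun y : V3 => (∑ k, y k * y k) * a i - (2 * ∑ k, a k * y k) * y i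
          + b * y i + (c (i+1) * y (i+2) - c (i+2) * y (i+1)) + d i := by
    funext y
    simp [dotp, cross]
  show pd j (fun y : V3 => (dotp y y • a - (2 * dotp a y) • y + b • y + cross c y + d) i) x = _
  rw [hfun, pd_formula]
  fin_cases i <;> fin_cases j <;>
    simp [mskw, cross, dotp, Matrix.one_apply, Fin.sum_univ_three] <;> ring

lemma vdiv_eq_trace (v : V3 → V3) (x : V3) : vdiv v x = (vgrad v x).trace := rfl

lemma trace_G (u c : V3) (s : ℝ) :
    ((2 : ℝ) • mskw u + mskw c + s • (1 : M3)).trace = 3 * s := by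
  simp [Matrix.trace_add, Matrix.trace_smul, trace_mskw]
  ring

lemma devm_G (u c : V3) (s : ℝ) :
    devm ((2 : ℝ) • mskw u + mskw c + s • (1 : M3)) = mskw ((2 : ℝ) • u + c) := by
  rw [devm, trace_G, ← mskw_add2]
  have : (1 / 3 * (3 * s) : ℝ) = s := by ring
  rw [this]
  abel

lemma msym_G (u c : V3) (s : ℝ) :
    msym ((2 : ℝ) • mskw u + mskw c + s • (1 : M3)) = s • (1 : M3) := by
  rw [msym]
  simp only [Matrix.transpose_add, Matrix.transpose_smul, mskw_transpose,
    Matrix.transpose_one]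
  module

/-- Affine functions are polynomials of degree at most one. -/
lemma affine_polyLe1 (α : ℝ) (β : V3) : PolyLe 1 (fun x => α + ∑ i, β i * x i) := by
  refine ⟨MvPolynomial.C α + ∑ i, MvPolynomial.C (β i) * MvPolynomial.X i, ?_, ?_⟩
  · refine le_trans (MvPolynomial.totalDegree_add _ _) (max_le (by simp) ?_)
    refine le_trans (MvPolynomial.totalDegree_finset_sum _ _) ?_
    refine Finset.sup_le fun i _ => ?_
    refine le_trans (MvPolynomial.totalDegree_mul _ _) ?_
    simp [MvPolynomial.totalDegree_X]
  · intro x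
    simp

lemma fin3_classify (d : Fin 3 →₀ ℕ) (h : ∑ i ∈ d.support, d i ≤ 1) :
    d = 0 ∨ ∃ j, d = Finsupp.single j 1 := by
  have hu : ∑ i ∈ d.support, d i = ∑ i : Fin 3, d i :=
    Finset.sum_subset (Finset.subset_univ _)
      (fun i _ hi => Finsupp.notMem_support_iff.mp hi)
  rw [hu, Fin.sum_univ_three] at h
  have h0 : d 0 = 0 ∨ d 0 = 1 := by omega
  have h1 : d 1 = 0 ∨ d 1 = 1 := by omega
  have h2 : d 2 = 0 ∨ d 2 = 1 := by omega
  rcases h0 with h0 | h0 <;> rcases h1 with h1 | h1 <;> rcases h2 with h2 | h2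
  · exact Or.inl (Finsupp.ext fun k => by fin_cases k <;> simp [h0, h1, h2])
  · exact Or.inr ⟨2, Finsupp.ext fun k => by
      fin_cases k <;> simp [h0, h1, h2, Finsupp.single_apply]⟩
  · exact Or.inr ⟨1, Finsupp.ext fun k => by
      fin_cases k <;> simp [h0, h1, h2, Finsupp.single_apply]⟩
  · omega
  · exact Or.inr ⟨0, Finsupp.ext fun k => by
      fin_cases k <;> simp [h0, h1, h2, Finsupp.single_apply]⟩
  · omega
  · omega
  · omega

/-- Polynomials of degree at most one are affine. -/
lemma polyLe1_affine (f : V3 → ℝ) (h : PolyLe 1 f) :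
    ∃ (α : ℝ) (β : V3), ∀ x, f x = α + ∑ i, β i * x i := by
  obtain ⟨p, hdeg, hf⟩ := h
  refine ⟨MvPolynomial.coeff 0 p, fun i => MvPolynomial.coeff (Finsupp.single i 1) p,
    fun x => ?_⟩
  have hp : p = MvPolynomial.C (MvPolynomial.coeff 0 p)
      + ∑ i, MvPolynomial.C (MvPolynomial.coeff (Finsupp.single i 1) p)
          * MvPolynomial.X i := by
    apply MvPolynomial.ext
    intro m
    rw [MvPolynomial.coeff_add, MvPolynomial.coeff_C, MvPolynomial.coeff_sum]
    simp only [MvPolynomial.coeff_C_mul, MvPolynomial.coeff_X']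
    by_cases hm : ∑ i ∈ m.support, m i ≤ 1
    · rcases fin3_classify m hm with rfl | ⟨j, rfl⟩
      · have : ∀ i : Fin 3, ¬ (Finsupp.single i 1 = (0 : Fin 3 →₀ ℕ)) := fun i hq =>
          one_ne_zero (Finsupp.single_eq_zero.mp hq)
        simp [this]
      · have hne : ¬ ((0 : Fin 3 →₀ ℕ) = Finsupp.single j 1) := fun hq =>
          one_ne_zero (Finsupp.single_eq_zero.mp hq.symm)
        have hiff : ∀ i : Fin 3,
            (Finsupp.single i 1 = Finsupp.single j (1:ℕ)) ↔ i = j := fun i =>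
          ⟨fun hq => by
            by_contra hij
            have := Finsupp.single_eq_single_iff i j 1 1 |>.mp hq
            tauto,
           fun hq => by rw [hq]⟩
        simp only [hiff, hne, if_false, zero_add, mul_ite, mul_one, mul_zero]
        rw [Finset.sum_ite_eq' Finset.univ j
          (fun i => MvPolynomial.coeff (Finsupp.single i 1) p)]
        simp
    · push_neg at hm
      have hz : MvPolynomial.coeff m p = 0 :=
        MvPolynomial.coeff_eq_zero_of_totalDegree_lt (lt_of_le_of_lt hdeg hm)
      have hm0 : ¬ ((0 : Fin 3 →₀ ℕ) = m) := by
        rintro rfl; simp at hm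
      have hms : ∀ j : Fin 3, ¬ (Finsupp.single j (1:ℕ) = m) := by
        rintro j rfl
        have : ∑ i ∈ (Finsupp.single j (1:ℕ)).support, Finsupp.single j (1:ℕ) i = 1 := by
          rw [Finsupp.support_single_ne_zero j one_ne_zero]
          simp
        omega
      rw [hz, if_neg hm0, Finset.sum_eq_zero fun i _ => by rw [if_neg (hms i), mul_zero],
        add_zero]
  conv_lhs => rw [hf, hp]
  simp [mul_comm]

lemma cross_smul_left (t : ℝ) (u v : V3) : cross (t • u) v = t • cross u v := by
  funext i; simp [cross, Pi.smul_apply, smul_eq_mul]; ring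

lemma crossAnti3 (u v : V3) : cross u v = -cross v u := by
  funext i; simp [cross]; ring

/-- derivative data of conformal Killing fields. -/
theorem conformal_killing_derivative_data :
    ({g : V3 → M3 | ∃ v, CK v ∧ g = fun x => devm (vgrad v x)} =
      {g : V3 → M3 | ∃ w, RM w ∧ g = fun x => mskw (w x)}) ∧
    ({g : V3 → M3 | ∃ v, CK v ∧ g = fun x => msym (vgrad v x)} =
      {g : V3 → M3 | ∃ p : V3 → ℝ, PolyLe 1 p ∧ g = fun x => p x • (1 : M3)}) ∧
    ({f : V3 → ℝ | ∃ v, CK v ∧ f = vdiv v} = {f : V3 → ℝ | PolyLe 1 f}) ∧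
    (∀ (a c d : V3) (b : ℝ) (x : V3),
      vgrad (fun y => dotp y y • a - (2 * dotp a y) • y + b • y + cross c y + d) x =
        (2 : ℝ) • mskw (cross x a) + mskw c + (b - 2 * dotp a x) • (1 : M3)) := by
  refine ⟨?_, ?_, ?_, grad_CK⟩
  · -- deviatoric part
    apply Set.ext; intro g
    simp only [Set.mem_setOf_eq]
    constructor
    · rintro ⟨v, ⟨a, c, d, b, hv⟩, rfl⟩
      refine ⟨fun x => cross ((-2 : ℝ) • a) x + c, ⟨(-2 : ℝ) • a, c, fun x => rfl⟩, ?_⟩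
      funext x
      rw [funext hv, grad_CK, devm_G]
      have h2 : (2 : ℝ) • cross x a + c = cross ((-2 : ℝ) • a) x + c := by
        funext i
        simp [cross, Pi.smul_apply, smul_eq_mul]
        ring
      rw [h2]
    · rintro ⟨w, ⟨a', b', hw⟩, rfl⟩
      refine ⟨fun y => dotp y y • ((-1/2 : ℝ) • a') - (2 * dotp ((-1/2 : ℝ) • a') y) • y
          + (0 : ℝ) • y + cross b' y + 0, ⟨(-1/2 : ℝ) • a', b', 0, 0, fun x => rfl⟩, ?_⟩
      funext x
      rw [grad_CK, devm_G, hw x]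
      have h2 : (2 : ℝ) • cross x ((-1/2 : ℝ) • a') + b' = cross a' x + b' := by
        funext i
        simp [cross, Pi.smul_apply, smul_eq_mul]
        ring
      rw [h2]
  · -- symmetric part
    apply Set.ext; intro g
    simp only [Set.mem_setOf_eq]
    constructor
    · rintro ⟨v, ⟨a, c, d, b, hv⟩, rfl⟩
      refine ⟨fun x => b - 2 * dotp a x, ?_, ?_⟩
      · have h : (fun x : V3 => b - 2 * dotp a x)
            = fun x => b + ∑ i, (-2 * a i) * x i := by
          funext x
          simp [dotp, Fin.sum_univ_three]
          ring
        rw [h]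
        exact affine_polyLe1 b _
      · funext x
        rw [funext hv, grad_CK, msym_G]
    · rintro ⟨p, hp, rfl⟩
      obtain ⟨α, β, hab⟩ := polyLe1_affine p hp
      refine ⟨fun y => dotp y y • ((-1/2 : ℝ) • β) - (2 * dotp ((-1/2 : ℝ) • β) y) • y
          + α • y + cross 0 y + 0, ⟨(-1/2 : ℝ) • β, 0, 0, α, fun x => rfl⟩, ?_⟩
      funext x
      rw [grad_CK, msym_G]
      have h : α - 2 * dotp ((-1/2 : ℝ) • β) x = p x := by
        rw [hab x]
        simp [dotp, Fin.sum_univ_three]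
        ring
      rw [h]
  · -- divergence
    apply Set.ext; intro f
    simp only [Set.mem_setOf_eq]
    constructor
    · rintro ⟨v, ⟨a, c, d, b, hv⟩, rfl⟩
      have h : vdiv v = fun x => 3 * b + ∑ i, (-6 * a i) * x i := by
        funext x
        rw [vdiv_eq_trace, funext hv, grad_CK, trace_G]
        simp [dotp, Fin.sum_univ_three]
        ring
      rw [h]
      exact affine_polyLe1 _ _
    · intro hf
      obtain ⟨α, β, hab⟩ := polyLe1_affine f hf
      refine ⟨fun y => dotp y y • ((-1/6 : ℝ) • β) - (2 * dotp ((-1/6 : ℝ) • β) y) • y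
          + (α/3) • y + cross 0 y + 0, ⟨(-1/6 : ℝ) • β, 0, 0, α/3, fun x => rfl⟩, ?_⟩
      funext x
      rw [hab x, vdiv_eq_trace, grad_CK, trace_G]
      simp [dotp, Fin.sum_univ_three]
      ring


end
end

section
/- Kernel of the deviatoric Hessian: a C^∞ function u : ℝ³ → ℝ satisfies dev(hess u) = 0 at every point of ℝ³ if and only if there exist α, γ ∈ ℝ and β ∈ ℝ³ such that u(x) = α + β·x + γ (x·x) for all x ∈ ℝ³; that is, the kernel of dev∘hess on smooth functions is CH := P₁ + span{x·x}. -/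
noncomputable section

open Matrix

namespace Aux

lemma pd_smooth {f : V3 → ℝ} (hf : ContDiff ℝ (⊤ : ℕ∞) f) (i : Fin 3) : ContDiff ℝ (⊤ : ℕ∞) (pd i f) :=
  (hf.fderiv_right (by simp)).clm_apply contDiff_const

lemma pd_const (i : Fin 3) (c : ℝ) (x : V3) : pd i (fun _ => c) x = 0 := by
  simp [pd]

lemma pd_add {f g : V3 → ℝ} (hf : Differentiable ℝ f) (hg : Differentiable ℝ g) (i : Fin 3)
    (x : V3) : pd i (fun y => f y + g y) x = pd i f x + pd i g x := by
  simp [pd, fderiv_fun_add (hf x) (hg x)]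

lemma pd_sub {f g : V3 → ℝ} (hf : Differentiable ℝ f) (hg : Differentiable ℝ g) (i : Fin 3)
    (x : V3) : pd i (fun y => f y - g y) x = pd i f x - pd i g x := by
  simp [pd, fderiv_fun_sub (hf x) (hg x)]

lemma pd_const_mul {f : V3 → ℝ} (hf : Differentiable ℝ f) (c : ℝ) (i : Fin 3)
    (x : V3) : pd i (fun y => c * f y) x = c * pd i f x := by
  simp [pd, fderiv_const_mul (hf x) c]

lemma pd_mul {f g : V3 → ℝ} (hf : Differentiable ℝ f) (hg : Differentiable ℝ g) (i : Fin 3)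
    (x : V3) : pd i (fun y => f y * g y) x = f x * pd i g x + g x * pd i f x := by
  simp [pd, fderiv_fun_mul (hf x) (hg x)]

lemma pd_proj (i j : Fin 3) (x : V3) : pd i (fun y => y j) x = if i = j then 1 else 0 := by
  have : (fun y : V3 => y j) = fun y => (ContinuousLinearMap.proj j : V3 →L[ℝ] ℝ) y := rfl
  rw [pd, this, ContinuousLinearMap.fderiv]
  simp [Pi.single_apply, eq_comm]

lemma pd_sum {ι : Type*} (s : Finset ι) (f : ι → V3 → ℝ) (hf : ∀ k, Differentiable ℝ (f k))
    (i : Fin 3) (x : V3) : pd i (fun y => ∑ k ∈ s, f k y) x = ∑ k ∈ s, pd i (f k) x := by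
  simp [pd, fderiv_fun_sum (fun k _ => (hf k x))]

lemma dotp_smooth (b : V3) : ContDiff ℝ (⊤ : ℕ∞) (fun x : V3 => dotp b x) := by
  unfold dotp
  exact ContDiff.sum fun i _ => contDiff_const.mul (contDiff_apply ℝ ℝ i)

lemma q_smooth : ContDiff ℝ (⊤ : ℕ∞) (fun x : V3 => dotp x x) := by
  unfold dotp
  exact ContDiff.sum fun i _ => (contDiff_apply ℝ ℝ i).mul (contDiff_apply ℝ ℝ i)

lemma pd_dotp_left (b : V3) (i : Fin 3) (x : V3) : pd i (fun y => dotp b y) x = b i := by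
  unfold dotp
  rw [pd_sum _ (fun k y => b k * y k) (fun k => (differentiable_const _).mul (differentiable_apply k))]
  rw [Finset.sum_eq_single i]
  · rw [pd_const_mul (differentiable_apply i), pd_proj]; simp
  · intro k _ hk
    rw [pd_const_mul (differentiable_apply k), pd_proj]
    simp [hk.symm]
  · simp

lemma pd_q (i : Fin 3) (x : V3) : pd i (fun y => dotp y y) x = 2 * x i := by
  unfold dotp
  rw [pd_sum _ (fun k y => y k * y k) (fun k => (differentiable_apply k).mul (differentiable_apply k))]
  rw [Finset.sum_eq_single i]
  · rw [pd_mul (differentiable_apply i) (differentiable_apply i), pd_proj]; simp; ring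
  · intro k _ hk
    rw [pd_mul (differentiable_apply k) (differentiable_apply k), pd_proj]
    simp [hk.symm]
  · simp

lemma pd_pd_eq (f : V3 → ℝ) (hf : ContDiff ℝ (⊤ : ℕ∞) f) (i j : Fin 3) (x : V3) :
    pd i (pd j f) x = fderiv ℝ (fderiv ℝ f) x (Pi.single i 1) (Pi.single j 1) := by
  have hf' : Differentiable ℝ (fderiv ℝ f) :=
    (hf.fderiv_right (m := 1) (by norm_cast)).differentiable (by simp)
  rw [pd]
  have : pd j f = fun y => (fderiv ℝ f y) (Pi.single j 1) := rfl
  rw [this, fderiv_clm_apply (hf' x) (differentiableAt_const _)]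
  simp

lemma pd_comm (f : V3 → ℝ) (hf : ContDiff ℝ (⊤ : ℕ∞) f) (i j : Fin 3) (x : V3) :
    pd i (pd j f) x = pd j (pd i f) x := by
  rw [pd_pd_eq f hf, pd_pd_eq f hf]
  have hd : Differentiable ℝ f := hf.differentiable (by simp)
  have hf' : Differentiable ℝ (fderiv ℝ f) :=
    (hf.fderiv_right (m := 1) (by norm_cast)).differentiable (by simp)
  exact second_derivative_symmetric (fun y => (hd y).hasFDerivAt) (hf' x).hasFDerivAt _ _

lemma fderiv_eq_sum (f : V3 → ℝ) (x v : V3) :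
    fderiv ℝ f x v = ∑ i, v i * pd i f x := by
  have hv : v = ∑ i, v i • (Pi.single i (1:ℝ) : V3) := by
    conv_lhs => rw [← Finset.univ_sum_single v]
    refine Finset.sum_congr rfl fun i _ => ?_
    ext j; simp [Pi.single_apply]
  conv_lhs => rw [hv]
  rw [map_sum]
  simp [pd]

end Aux

open Aux

/-- kernel of the deviatoric Hessian is CH = P₁ + span{x·x}. -/
theorem kernel_dev_hess (u : V3 → ℝ) (hu : ContDiff ℝ (⊤ : ℕ∞) u) :
    (∀ x, devm (hess u x) = 0) ↔
      ∃ (α γ : ℝ) (β : V3), ∀ x, u x = α + dotp β x + γ * dotp x x := by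
  constructor
  · intro hdev
    have hA : ∀ x, hess u x = ((1/3 : ℝ) * (hess u x).trace) • (1 : M3) := by
      intro x
      have := hdev x
      unfold devm at this
      exact sub_eq_zero.mp this
    have hoff : ∀ (x : V3) (i j : Fin 3), i ≠ j → pd i (pd j u) x = 0 := by
      intro x i j hij
      have := congrFun (congrFun (hA x) i) j
      simpa [hess, Matrix.one_apply, hij] using this
    set c : V3 → ℝ := fun x => (1/3 : ℝ) * (hess u x).trace with hc
    have hdiag : ∀ (x : V3) (i : Fin 3), pd i (pd i u) x = c x := by
      intro x i
      have := congrFun (congrFun (hA x) i) i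
      rw [hc]
      simpa [hess, Matrix.one_apply] using this
    -- c is smooth
    have hcs : ContDiff ℝ (⊤ : ℕ∞) c := by
      have : c = pd 0 (pd 0 u) := by
        funext y; rw [← hdiag y 0]
      rw [this]
      exact pd_smooth (pd_smooth hu 0) 0
    -- all partials of c vanish
    have hpc : ∀ (k : Fin 3) (x : V3), pd k c x = 0 := by
      intro k x
      set i : Fin 3 := if k = 0 then 1 else 0 with hi
      have hik : i ≠ k := by
        by_cases h0 : k = 0 <;> simp [hi, h0]
        exact fun h => h0 h.symm
      have hceq : c = pd i (pd i u) := by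
        funext y; rw [← hdiag y i]
      rw [hceq, pd_comm _ (pd_smooth hu i) k i, show pd k (pd i u) = fun _ => (0:ℝ) by
        funext y; exact hoff y k i (fun h => hik h.symm), pd_const]
    -- hence c is constant
    have hcconst : ∀ x, c x = c 0 := by
      intro x
      refine is_const_of_fderiv_eq_zero (hcs.differentiable (by simp)) (fun y => ?_) x 0
      refine ContinuousLinearMap.ext fun v => ?_
      rw [fderiv_eq_sum]
      simp [hpc]
    set γ : ℝ := c 0 / 2 with hγ
    set g : V3 → ℝ := fun x => u x - γ * dotp x x with hg
    have hgs : ContDiff ℝ (⊤ : ℕ∞) g := hu.sub (contDiff_const.mul q_smooth)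
    have hqd : Differentiable ℝ (fun y : V3 => dotp y y) := q_smooth.differentiable (by simp)
    have hpg : ∀ j, pd j g = fun y => pd j u y - (γ * 2) * y j := by
      intro j
      funext y
      rw [hg, pd_sub (g := fun y => γ * dotp y y) (hu.differentiable (by simp)) ((differentiable_const γ).mul hqd),
        pd_const_mul hqd, pd_q]
      ring
    have hessg : ∀ (i j : Fin 3) (x : V3), pd i (pd j g) x = 0 := by
      intro i j x
      rw [hpg j, show (fun y : V3 => pd j u y - (γ * 2) * y j)
            = fun y => pd j u y - (γ * 2) * y j from rfl,
        pd_sub (g := fun y => γ * 2 * y j) ((pd_smooth hu j).differentiable (by simp))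
          ((differentiable_const _).mul (differentiable_apply j)),
        pd_const_mul (differentiable_apply j), pd_proj]
      by_cases hij : i = j
      · subst hij
        rw [hdiag x i, hcconst x]
        simp [hγ]
      · rw [hoff x i j hij]
        simp [hij]
    -- fderiv g is constant
    have hF : Differentiable ℝ (fderiv ℝ g) :=
      (hgs.fderiv_right (m := 1) (by norm_cast)).differentiable (by simp)
    have hFconst : ∀ x, fderiv ℝ g x = fderiv ℝ g 0 := by
      intro x
      refine is_const_of_fderiv_eq_zero hF (fun y => ?_) x 0
      refine ContinuousLinearMap.ext fun v => ?_
      refine ContinuousLinearMap.ext fun w => ?_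
      have hw : w = ∑ j, w j • (Pi.single j (1:ℝ) : V3) := by
        conv_lhs => rw [← Finset.univ_sum_single w]
        refine Finset.sum_congr rfl fun j _ => ?_
        ext m; simp [Pi.single_apply]
      have key : ∀ j : Fin 3, (fderiv ℝ (fderiv ℝ g) y v) (Pi.single j 1) = 0 := by
        intro j
        have h1 : fderiv ℝ (fun z => fderiv ℝ g z (Pi.single j 1)) y
            = (fderiv ℝ (fderiv ℝ g) y).flip (Pi.single j 1) := by
          rw [fderiv_clm_apply (hF y) (differentiableAt_const _)]
          simp
        have h2 : (fun z => fderiv ℝ g z (Pi.single j 1)) = pd j g := rfl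
        have h3 := DFunLike.congr_fun h1 v
        rw [h2] at h3
        have h4 : fderiv ℝ (pd j g) y v = ∑ i, v i * pd i (pd j g) y := fderiv_eq_sum _ _ _
        simp only [hessg, mul_zero, Finset.sum_const_zero] at h4
        simpa [ContinuousLinearMap.flip_apply] using h3.symm.trans h4
      conv_lhs => rw [hw]
      rw [map_sum]
      simp [key]
    set L := fderiv ℝ g 0 with hL
    have hgaff : ∀ x, g x = g 0 + L x := by
      intro x
      have hld : Differentiable ℝ (fun y : V3 => L y) := L.differentiable
      have hhd : Differentiable ℝ (fun y => g y - L y) := (hgs.differentiable (by simp)).sub hld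
      have : (fun y => g y - L y) x = (fun y => g y - L y) 0 := by
        refine is_const_of_fderiv_eq_zero hhd (fun y => ?_) x 0
        rw [fderiv_fun_sub ((hgs.differentiable (by simp)) y) (hld y), L.fderiv, hFconst y]
        exact sub_self _
      simp only [map_zero, sub_zero] at this
      linarith [this]
    refine ⟨g 0, γ, fun i => pd i g 0, fun x => ?_⟩
    have : u x = g x + γ * dotp x x := by rw [hg]; ring
    rw [this, hgaff x]
    have hLx : L x = dotp (fun i => pd i g 0) x := by
      rw [hL, fderiv_eq_sum]
      unfold dotp
      exact Finset.sum_congr rfl fun i _ => mul_comm _ _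
    rw [hLx]

  · intro ⟨α, γ, β, h⟩
    have hu' : u = fun x => α + dotp β x + γ * dotp x x := funext h
    subst hu'
    intro x
    have hdb : Differentiable ℝ (fun y : V3 => dotp β y) := (dotp_smooth β).differentiable (by simp)
    have hq : Differentiable ℝ (fun y : V3 => dotp y y) := q_smooth.differentiable (by simp)
    have h1 : ∀ j, pd j (fun y : V3 => α + dotp β y + γ * dotp y y)
        = fun y => β j + γ * (2 * y j) := by
      intro j
      funext y
      rw [show (fun y : V3 => α + dotp β y + γ * dotp y y)
            = fun y => (α + dotp β y) + γ * dotp y y from rfl,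
        pd_add (f := fun y => α + dotp β y) (g := fun y => γ * dotp y y) ((differentiable_const α).add hdb) ((differentiable_const γ).mul hq),
        pd_add (differentiable_const α) hdb, pd_const, pd_dotp_left,
        pd_const_mul hq, pd_q, zero_add]
    have h2 : hess (fun y : V3 => α + dotp β y + γ * dotp y y) x = (2 * γ) • (1 : M3) := by
      ext i j
      show pd i (pd j fun y : V3 => α + dotp β y + γ * dotp y y) x = _
      rw [h1 j]
      rw [show (fun y : V3 => β j + γ * (2 * y j)) = fun y => β j + (γ * 2) * y j by
        funext y; ring]
      rw [pd_add (g := fun y => γ * 2 * y j) (differentiable_const _) ((differentiable_const _).mul (differentiable_apply j)),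
        pd_const, pd_const_mul (differentiable_apply j), pd_proj]
      by_cases hij : i = j <;> simp [hij, Matrix.one_apply] <;> ring
    rw [h2]
    unfold devm
    rw [Matrix.trace_smul, Matrix.trace_one]
    have h3 : (1/3 : ℝ) * ((2 * γ) • ((Fintype.card (Fin 3)) : ℝ)) = 2 * γ := by
      simp [smul_eq_mul]; ring
    rw [h3, sub_self]


end
end

section
/- Kernel of the deviatoric deformation operator: a C^∞ vector field v : ℝ³ → ℝ³ satisfies dev(sym(grad v)) = 0 at every point of ℝ³ if and only if v ∈ CK, i.e., there exist a, c, d ∈ ℝ³ and b ∈ ℝ with v(x) = (x·x)a − 2(a·x)x + b x + c × x + d for all x ∈ ℝ³. -/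
noncomputable section

open Matrix

section Helpers

lemma fin3_mk0 (h : 0 < 3) : (⟨0, h⟩ : Fin 3) = 0 := rfl
lemma fin3_mk1 (h : 1 < 3) : (⟨1, h⟩ : Fin 3) = 1 := rfl
lemma fin3_mk2 (h : 2 < 3) : (⟨2, h⟩ : Fin 3) = 2 := rfl
lemma fin3_a01 : (0:Fin 3)+1 = 1 := rfl
lemma fin3_a02 : (0:Fin 3)+2 = 2 := rfl
lemma fin3_a11 : (1:Fin 3)+1 = 2 := rfl
lemma fin3_a12 : (1:Fin 3)+2 = 0 := rfl
lemma fin3_a21 : (2:Fin 3)+1 = 0 := rfl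
lemma fin3_a22 : (2:Fin 3)+2 = 1 := rfl

lemma pd_coord (i j : Fin 3) (x : V3) : pd i (fun y => y j) x = if j = i then 1 else 0 := by
  have h : fderiv ℝ (fun y : V3 => y j) x = ContinuousLinearMap.proj j :=
    (ContinuousLinearMap.proj (R := ℝ) (φ := fun _ : Fin 3 => ℝ) j).fderiv
  simp [pd, h, Pi.single_apply]

lemma pd_add {f g : V3 → ℝ} {x : V3} (i : Fin 3) (hf : DifferentiableAt ℝ f x)
    (hg : DifferentiableAt ℝ g x) :
    pd i (fun y => f y + g y) x = pd i f x + pd i g x := by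
  simp [pd, fderiv_fun_add hf hg]

lemma pd_sub {f g : V3 → ℝ} {x : V3} (i : Fin 3) (hf : DifferentiableAt ℝ f x)
    (hg : DifferentiableAt ℝ g x) :
    pd i (fun y => f y - g y) x = pd i f x - pd i g x := by
  simp [pd, fderiv_fun_sub hf hg]

lemma pd_mul {f g : V3 → ℝ} {x : V3} (i : Fin 3) (hf : DifferentiableAt ℝ f x)
    (hg : DifferentiableAt ℝ g x) :
    pd i (fun y => f y * g y) x = f x * pd i g x + g x * pd i f x := by
  simp [pd, fderiv_fun_mul hf hg]

lemma pd_const (i : Fin 3) (c : ℝ) (x : V3) : pd i (fun _ => c) x = 0 := by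
  simp [pd]

lemma pd_smooth {f : V3 → ℝ} (hf : ContDiff ℝ (⊤ : ℕ∞) f) (i : Fin 3) : ContDiff ℝ (⊤ : ℕ∞) (pd i f) := by
  have h : pd i f = (fun L : V3 →L[ℝ] ℝ => L (Pi.single i 1)) ∘ fderiv ℝ f := rfl
  rw [h]
  exact (ContinuousLinearMap.apply ℝ ℝ (Pi.single i 1)).contDiff.comp (hf.fderiv_right (m := (⊤ : ℕ∞)) (by simp))

lemma pd_comm {f : V3 → ℝ} (hf : ContDiff ℝ (⊤ : ℕ∞) f) (i j : Fin 3) (x : V3) :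
    pd i (pd j f) x = pd j (pd i f) x := by
  have hd : Differentiable ℝ f := hf.differentiable (by simp)
  have hd' : DifferentiableAt ℝ (fderiv ℝ f) x :=
    ((hf.fderiv_right (m := (⊤ : ℕ∞)) (by simp)).differentiable (by simp)) x
  have hsym := second_derivative_symmetric (f := f) (f' := fderiv ℝ f)
    (f'' := fderiv ℝ (fderiv ℝ f) x) (fun y => (hd y).hasFDerivAt) hd'.hasFDerivAt
  have key : ∀ a b : Fin 3, pd a (pd b f) x
      = fderiv ℝ (fderiv ℝ f) x (Pi.single a 1) (Pi.single b 1) := by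
    intro a b
    rw [show pd a (pd b f) x
        = fderiv ℝ (fun y => (fderiv ℝ f y) (Pi.single b 1)) x (Pi.single a 1) from rfl]
    rw [fderiv_clm_apply hd' (differentiableAt_const _)]
    simp
  rw [key, key, hsym]

lemma eq_const_of_pd {f : V3 → ℝ} (hf : Differentiable ℝ f) (h : ∀ i x, pd i f x = 0)
    (x : V3) : f x = f 0 := by
  apply is_const_of_fderiv_eq_zero hf ?_ x 0
  intro y
  ext w
  have hw : (w : V3) = ∑ i : Fin 3, w i • (Pi.single i 1 : V3) := by
    funext j
    simp [Pi.single_apply, Finset.sum_apply, mul_ite]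
  rw [ContinuousLinearMap.zero_apply, hw, map_sum]
  simp only [_root_.map_smul]
  have hz : ∀ i : Fin 3, fderiv ℝ f y (Pi.single i 1) = 0 := fun i => h i y
  simp [hz]

/-- first derivatives of the CK quadratic -/
lemma pd_poly (a c d : V3) (b : ℝ) (k j : Fin 3) (x : V3) :
    pd j (fun y : V3 => (y 0 * y 0 + y 1 * y 1 + y 2 * y 2) * a k
      - 2 * (a 0 * y 0 + a 1 * y 1 + a 2 * y 2) * y k + b * y k
      + (c (k+1) * y (k+2) - c (k+2) * y (k+1)) + d k) x
    = (2 * x 0 * (if (0:Fin 3) = j then 1 else 0) + 2 * x 1 * (if (1:Fin 3) = j then 1 else 0)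
        + 2 * x 2 * (if (2:Fin 3) = j then 1 else 0)) * a k
      - 2 * ((a 0 * x 0 + a 1 * x 1 + a 2 * x 2) * (if k = j then 1 else 0)
        + x k * (a 0 * (if (0:Fin 3) = j then 1 else 0) + a 1 * (if (1:Fin 3) = j then 1 else 0)
          + a 2 * (if (2:Fin 3) = j then 1 else 0)))
      + b * (if k = j then 1 else 0)
      + (c (k+1) * (if k+2 = j then 1 else 0) - c (k+2) * (if k+1 = j then 1 else 0)) := by
  simp (disch := fun_prop) only [pd_add, pd_sub, pd_mul, pd_coord, pd_const]
  ring

set_option maxRecDepth 10000 in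
lemma recon (v : V3 → V3) (hv : ∀ i, ContDiff ℝ (⊤ : ℕ∞) fun x => v x i) (a c d : V3) (b : ℝ)
    (h2 : ∀ i j k : Fin 3, ∀ x, pd i (pd j (fun y => v y k)) x
      = 2 * (if j = i then 1 else 0) * a k - 2 * a j * (if k = i then 1 else 0)
        - 2 * a i * (if k = j then 1 else 0))
    (h1 : ∀ j k : Fin 3, pd j (fun y => v y k) 0
      = b * (if k = j then 1 else 0)
        + (c (k+1) * (if k+2 = j then 1 else 0) - c (k+2) * (if k+1 = j then 1 else 0)))
    (h0 : ∀ k, v 0 k = d k) (k : Fin 3) (x : V3) :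
    v x k = (x 0 * x 0 + x 1 * x 1 + x 2 * x 2) * a k
      - 2 * (a 0 * x 0 + a 1 * x 1 + a 2 * x 2) * x k + b * x k
      + (c (k+1) * x (k+2) - c (k+2) * x (k+1)) + d k := by
  have hvd : ∀ m, Differentiable ℝ (fun y : V3 => v y m) := fun m => (hv m).differentiable (by simp)
  have hDd : ∀ j m : Fin 3, Differentiable ℝ (pd j (fun y : V3 => v y m)) :=
    fun j m => (pd_smooth (hv m) j).differentiable (by simp)
  -- the first derivatives of the difference, as an explicit function
  have hP : ∀ j : Fin 3, ∀ y, pd j (fun z => v z k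
        - ((z 0 * z 0 + z 1 * z 1 + z 2 * z 2) * a k
          - 2 * (a 0 * z 0 + a 1 * z 1 + a 2 * z 2) * z k + b * z k
          + (c (k+1) * z (k+2) - c (k+2) * z (k+1)) + d k)) y
      = pd j (fun z => v z k) y
        - ((2 * y 0 * (if (0:Fin 3) = j then 1 else 0) + 2 * y 1 * (if (1:Fin 3) = j then 1 else 0)
            + 2 * y 2 * (if (2:Fin 3) = j then 1 else 0)) * a k
          - 2 * ((a 0 * y 0 + a 1 * y 1 + a 2 * y 2) * (if k = j then 1 else 0)
            + y k * (a 0 * (if (0:Fin 3) = j then 1 else 0) + a 1 * (if (1:Fin 3) = j then 1 else 0)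
              + a 2 * (if (2:Fin 3) = j then 1 else 0)))
          + b * (if k = j then 1 else 0)
          + (c (k+1) * (if k+2 = j then 1 else 0) - c (k+2) * (if k+1 = j then 1 else 0))) := by
    intro j y
    rw [pd_sub j ((hvd k) y) (by fun_prop), pd_poly]
  -- all first derivatives of the difference vanish
  have hPzero : ∀ j : Fin 3, ∀ y, pd j (fun z => v z k
        - ((z 0 * z 0 + z 1 * z 1 + z 2 * z 2) * a k
          - 2 * (a 0 * z 0 + a 1 * z 1 + a 2 * z 2) * z k + b * z k
          + (c (k+1) * z (k+2) - c (k+2) * z (k+1)) + d k)) y = 0 := by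
    intro j y
    have hfe : pd j (fun z => v z k
        - ((z 0 * z 0 + z 1 * z 1 + z 2 * z 2) * a k
          - 2 * (a 0 * z 0 + a 1 * z 1 + a 2 * z 2) * z k + b * z k
          + (c (k+1) * z (k+2) - c (k+2) * z (k+1)) + d k))
      = fun y => pd j (fun z => v z k) y
        - ((2 * y 0 * (if (0:Fin 3) = j then 1 else 0) + 2 * y 1 * (if (1:Fin 3) = j then 1 else 0)
            + 2 * y 2 * (if (2:Fin 3) = j then 1 else 0)) * a k
          - 2 * ((a 0 * y 0 + a 1 * y 1 + a 2 * y 2) * (if k = j then 1 else 0)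
            + y k * (a 0 * (if (0:Fin 3) = j then 1 else 0) + a 1 * (if (1:Fin 3) = j then 1 else 0)
              + a 2 * (if (2:Fin 3) = j then 1 else 0)))
          + b * (if k = j then 1 else 0)
          + (c (k+1) * (if k+2 = j then 1 else 0) - c (k+2) * (if k+1 = j then 1 else 0))) :=
      funext (hP j)
    rw [hfe]
    have hDjk := hDd j k
    have hdiff : Differentiable ℝ (fun y : V3 => pd j (fun z => v z k) y
        - ((2 * y 0 * (if (0:Fin 3) = j then 1 else 0) + 2 * y 1 * (if (1:Fin 3) = j then 1 else 0)
            + 2 * y 2 * (if (2:Fin 3) = j then 1 else 0)) * a k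
          - 2 * ((a 0 * y 0 + a 1 * y 1 + a 2 * y 2) * (if k = j then 1 else 0)
            + y k * (a 0 * (if (0:Fin 3) = j then 1 else 0) + a 1 * (if (1:Fin 3) = j then 1 else 0)
              + a 2 * (if (2:Fin 3) = j then 1 else 0)))
          + b * (if k = j then 1 else 0)
          + (c (k+1) * (if k+2 = j then 1 else 0) - c (k+2) * (if k+1 = j then 1 else 0)))) := by
      fun_prop
    have hz : ∀ i : Fin 3, ∀ w, pd i (fun y : V3 => pd j (fun z => v z k) y
        - ((2 * y 0 * (if (0:Fin 3) = j then 1 else 0) + 2 * y 1 * (if (1:Fin 3) = j then 1 else 0)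
            + 2 * y 2 * (if (2:Fin 3) = j then 1 else 0)) * a k
          - 2 * ((a 0 * y 0 + a 1 * y 1 + a 2 * y 2) * (if k = j then 1 else 0)
            + y k * (a 0 * (if (0:Fin 3) = j then 1 else 0) + a 1 * (if (1:Fin 3) = j then 1 else 0)
              + a 2 * (if (2:Fin 3) = j then 1 else 0)))
          + b * (if k = j then 1 else 0)
          + (c (k+1) * (if k+2 = j then 1 else 0) - c (k+2) * (if k+1 = j then 1 else 0)))) w
        = 0 := by
      intro i w
      simp (disch := fun_prop) only [pd_add, pd_sub, pd_mul, pd_coord, pd_const]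
      rw [h2]
      fin_cases i <;> fin_cases j <;>
        norm_num [fin3_mk0, fin3_mk1, fin3_mk2, fin3_a01, fin3_a02, fin3_a11, fin3_a12, fin3_a21, fin3_a22] <;>
        split_ifs <;> first | ring1 | (exfalso; omega) | simp_all | ring
    beta_reduce
    have heq := eq_const_of_pd hdiff hz y
    rw [heq]
    simp only [h1]
    norm_num
  -- second stage: the difference itself is constant, equal to its value 0 at the origin
  have hud : Differentiable ℝ (fun z : V3 => v z k
        - ((z 0 * z 0 + z 1 * z 1 + z 2 * z 2) * a k
          - 2 * (a 0 * z 0 + a 1 * z 1 + a 2 * z 2) * z k + b * z k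
          + (c (k+1) * z (k+2) - c (k+2) * z (k+1)) + d k)) := by
    have := hvd k
    fun_prop
  have hval := eq_const_of_pd hud hPzero x
  have h0k := h0 k
  norm_num at hval
  linarith [hval]

end Helpers

set_option maxHeartbeats 2000000 in
/-- kernel of the deviatoric deformation operator is CK. -/
theorem kernel_dev_def (v : V3 → V3) (hv : SmoothV v) :
    (∀ x, devm (msym (vgrad v x)) = 0) ↔ CK v := by
  constructor
  · intro h
    have hvc : ∀ i, ContDiff ℝ (⊤ : ℕ∞) fun x => v x i := hv
    have hvd : ∀ m, Differentiable ℝ (fun y : V3 => v y m) :=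
      fun m => (hvc m).differentiable (by simp)
    have hDd : ∀ j m : Fin 3, Differentiable ℝ (pd j (fun y : V3 => v y m)) :=
      fun j m => (pd_smooth (hvc m) j).differentiable (by simp)
    have hG2d : ∀ m : Fin 3, Differentiable ℝ (pd m (pd 0 (fun y => v y 0))) :=
      fun m => (pd_smooth (pd_smooth (hvc 0) 0) m).differentiable (by simp)
    -- Step A : the scalar form of the hypothesis
    have hR : ∀ (x : V3) (p q : Fin 3), pd p (fun y => v y q) x + pd q (fun y => v y p) x
        = 2 * pd 0 (fun y => v y 0) x * (if q = p then 1 else 0) := by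
      intro x p q
      have e : ∀ a b : Fin 3, devm (msym (vgrad v x)) a b = 0 := fun a b => by rw [h x]; rfl
      have e00 := e 0 0
      have e01 := e 0 1
      have e02 := e 0 2
      have e10 := e 1 0
      have e11 := e 1 1
      have e12 := e 1 2
      have e20 := e 2 0
      have e21 := e 2 1
      have e22 := e 2 2
      simp only [devm, msym, vgrad, Matrix.sub_apply, Matrix.smul_apply, Matrix.add_apply,
        Matrix.transpose_apply, Matrix.of_apply, Matrix.one_apply, Matrix.trace, Matrix.diag,
        Fin.sum_univ_three, smul_eq_mul] at e00 e01 e02 e10 e11 e12 e20 e21 e22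
      norm_num [Fin.ext_iff] at e00 e01 e02 e10 e11 e12 e20 e21 e22
      fin_cases p <;> fin_cases q <;>
        norm_num [Fin.ext_iff, fin3_mk0, fin3_mk1, fin3_mk2, fin3_a01, fin3_a02, fin3_a11, fin3_a12, fin3_a21, fin3_a22] <;> linarith
    -- Step B : the second derivatives are controlled by the gradient of the divergence
    have hswap : ∀ (p q r : Fin 3) (x : V3),
        pd p (pd q (fun y => v y r)) x = pd q (pd p (fun y => v y r)) x :=
      fun p q r x => pd_comm (hvc r) p q x
    have huseR : ∀ (p q r : Fin 3) (x : V3), pd p (pd q (fun y => v y r)) x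
        = 2 * (if r = q then 1 else 0) * pd p (pd 0 (fun y => v y 0)) x
          - pd p (pd r (fun y => v y q)) x := by
      intro p q r x
      have hfe : pd q (fun y => v y r)
          = fun z => 2 * pd 0 (fun y => v y 0) z * (if r = q then 1 else 0)
            - pd r (fun y => v y q) z := by
        funext z
        have hz := hR z q r
        linarith
      rw [hfe]
      have h1 := hDd 0 0
      have h2 := hDd r q
      simp (disch := fun_prop) only [pd_sub, pd_mul, pd_const]
      ring
    have hB : ∀ (i j k : Fin 3) (x : V3), pd i (pd j (fun y => v y k)) x
        = (if k = j then 1 else 0) * pd i (pd 0 (fun y => v y 0)) x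
          + (if k = i then 1 else 0) * pd j (pd 0 (fun y => v y 0)) x
          - (if j = i then 1 else 0) * pd k (pd 0 (fun y => v y 0)) x := by
      intro i j k x
      have t1 := huseR i j k x
      have t2 := hswap i k j x
      have t3 := huseR k i j x
      have t4 := hswap k j i x
      have t5 := huseR j k i x
      have t6 := hswap j i k x
      have flip : (if i = k then (1:ℝ) else 0) = (if k = i then 1 else 0) := by
        by_cases hik : i = k
        · simp [hik]
        · simp [hik, Ne.symm hik]
      rw [flip] at t5
      linarith
    -- Step C : the third derivatives vanish
    have hC : ∀ (l i j k : Fin 3) (x : V3), pd l (pd i (pd j (fun y => v y k))) x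
        = (if k = j then 1 else 0) * pd l (pd i (pd 0 (fun y => v y 0))) x
          + (if k = i then 1 else 0) * pd l (pd j (pd 0 (fun y => v y 0))) x
          - (if j = i then 1 else 0) * pd l (pd k (pd 0 (fun y => v y 0))) x := by
      intro l i j k x
      have hfe : pd i (pd j (fun y => v y k))
          = fun w => (if k = j then 1 else 0) * pd i (pd 0 (fun y => v y 0)) w
            + (if k = i then 1 else 0) * pd j (pd 0 (fun y => v y 0)) w
            - (if j = i then 1 else 0) * pd k (pd 0 (fun y => v y 0)) w :=
        funext fun w => hB i j k w
      rw [hfe]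
      have g1 := hG2d i
      have g2 := hG2d j
      have g3 := hG2d k
      simp (disch := fun_prop) only [pd_add, pd_sub, pd_mul, pd_const]
      ring
    have key : ∀ (l i j : Fin 3) (x : V3), pd l (pd i (pd 0 (fun y => v y 0))) x
        = (if j = l then 1 else 0) * pd j (pd i (pd 0 (fun y => v y 0))) x
          + (if j = i then 1 else 0) * pd j (pd l (pd 0 (fun y => v y 0))) x
          - (if l = i then 1 else 0) * pd j (pd j (pd 0 (fun y => v y 0))) x := by
      intro l i j x
      have hA1 : pd l (pd i (pd j (fun y => v y j))) x
          = pd l (pd i (pd 0 (fun y => v y 0))) x := by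
        have hc := hC l i j j x
        simp at hc
        linarith
      have c1 : pd i (pd j (fun y => v y j)) = pd j (pd i (fun y => v y j)) :=
        funext fun w => pd_comm (hvc j) i j w
      have c2 : pd l (pd j (pd i (fun y => v y j))) x
          = pd j (pd l (pd i (fun y => v y j))) x :=
        pd_comm (pd_smooth (hvc j) i) l j x
      have c3 : pd l (pd i (fun y => v y j)) = pd i (pd l (fun y => v y j)) :=
        funext fun w => pd_comm (hvc j) l i w
      have c4 := hC j i l j x
      calc pd l (pd i (pd 0 (fun y => v y 0))) x
          = pd l (pd i (pd j (fun y => v y j))) x := hA1.symm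
        _ = pd l (pd j (pd i (fun y => v y j))) x := by rw [c1]
        _ = pd j (pd l (pd i (fun y => v y j))) x := c2
        _ = pd j (pd i (pd l (fun y => v y j))) x := by rw [c3]
        _ = _ := c4
    have Hzero : ∀ (l i : Fin 3) (x : V3), pd l (pd i (pd 0 (fun y => v y 0))) x = 0 := by
      intro l i x
      have k1 := key 0 0 1 x
      have k2 := key 1 1 2 x
      have k3 := key 0 0 2 x
      have k4 := key 2 2 0 x
      have k5 := key 1 1 0 x
      have k6 := key 0 1 2 x
      have k7 := key 1 0 2 x
      have k8 := key 0 2 1 x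
      have k9 := key 2 0 1 x
      have k10 := key 1 2 0 x
      have k11 := key 2 1 0 x
      norm_num [Fin.ext_iff] at k1 k2 k3 k4 k5 k6 k7 k8 k9 k10 k11
      fin_cases l <;> fin_cases i <;>
        norm_num [Fin.ext_iff, fin3_mk0, fin3_mk1, fin3_mk2, fin3_a01, fin3_a02, fin3_a11, fin3_a12, fin3_a21, fin3_a22] <;>
        linarith
    have hGc : ∀ (m : Fin 3) (x : V3), pd m (pd 0 (fun y => v y 0)) x
        = pd m (pd 0 (fun y => v y 0)) 0 :=
      fun m x => eq_const_of_pd (hG2d m) (fun l w => Hzero l m w) x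
    -- reconstruction data
    have h2' : ∀ i j k : Fin 3, ∀ x, pd i (pd j (fun y => v y k)) x
        = 2 * (if j = i then 1 else 0) * (-(1/2) * pd k (pd 0 (fun y => v y 0)) 0)
          - 2 * (-(1/2) * pd j (pd 0 (fun y => v y 0)) 0) * (if k = i then 1 else 0)
          - 2 * (-(1/2) * pd i (pd 0 (fun y => v y 0)) 0) * (if k = j then 1 else 0) := by
      intro i j k x
      rw [hB i j k x, hGc i x, hGc j x, hGc k x]
      ring
    have h1' : ∀ j k : Fin 3, pd j (fun y => v y k) 0
        = pd 0 (fun y => v y 0) 0 * (if k = j then 1 else 0)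
          + ((if k+1 = 0 then pd 1 (fun y => v y 2) 0 else if k+1 = 1 then pd 2 (fun y => v y 0) 0
              else pd 0 (fun y => v y 1) 0) * (if k+2 = j then 1 else 0)
            - (if k+2 = 0 then pd 1 (fun y => v y 2) 0 else if k+2 = 1 then pd 2 (fun y => v y 0) 0
              else pd 0 (fun y => v y 1) 0) * (if k+1 = j then 1 else 0)) := by
      intro j k
      have r01 := hR 0 0 1
      have r02 := hR 0 0 2
      have r12 := hR 0 1 2
      have r11 := hR 0 1 1
      have r22 := hR 0 2 2
      norm_num [Fin.ext_iff] at r01 r02 r12 r11 r22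
      fin_cases j <;> fin_cases k <;>
        norm_num [Fin.ext_iff, fin3_mk0, fin3_mk1, fin3_mk2, fin3_a01, fin3_a02, fin3_a11, fin3_a12, fin3_a21, fin3_a22] <;>
        linarith
    have h0' : ∀ k : Fin 3, v 0 k = (v 0) k := fun k => rfl
    have hmain := fun (k : Fin 3) (x : V3) => recon v hvc
      (fun m => -(1/2) * pd m (pd 0 (fun y => v y 0)) 0)
      (fun m => if m = 0 then pd 1 (fun y => v y 2) 0 else if m = 1 then pd 2 (fun y => v y 0) 0
        else pd 0 (fun y => v y 1) 0)
      (v 0) (pd 0 (fun y => v y 0) 0) h2' h1' h0' k x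
    refine ⟨(fun m => -(1/2) * pd m (pd 0 (fun y => v y 0)) 0),
      (fun m => if m = 0 then pd 1 (fun y => v y 2) 0 else if m = 1 then pd 2 (fun y => v y 0) 0
        else pd 0 (fun y => v y 1) 0), v 0, pd 0 (fun y => v y 0) 0, ?_⟩
    intro x
    funext m
    rw [hmain m x]
    simp only [dotp, cross, Fin.sum_univ_three, Pi.add_apply, Pi.sub_apply, Pi.smul_apply,
      smul_eq_mul]
    try ring
  · intro hCK x
    obtain ⟨a, c, d, b, hvx⟩ := hCK
    have hcomp : ∀ (m : Fin 3) (y : V3), v y m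
        = (y 0 * y 0 + y 1 * y 1 + y 2 * y 2) * a m
          - 2 * (a 0 * y 0 + a 1 * y 1 + a 2 * y 2) * y m + b * y m
          + (c (m+1) * y (m+2) - c (m+2) * y (m+1)) + d m := by
      intro m y
      rw [hvx y]
      simp only [dotp, cross, Fin.sum_univ_three, Pi.add_apply, Pi.sub_apply, Pi.smul_apply,
        smul_eq_mul]
      try ring
    have hpd : ∀ (m j : Fin 3) (x : V3), pd j (fun y => v y m) x
        = (2 * x 0 * (if (0:Fin 3) = j then 1 else 0) + 2 * x 1 * (if (1:Fin 3) = j then 1 else 0)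
            + 2 * x 2 * (if (2:Fin 3) = j then 1 else 0)) * a m
          - 2 * ((a 0 * x 0 + a 1 * x 1 + a 2 * x 2) * (if m = j then 1 else 0)
            + x m * (a 0 * (if (0:Fin 3) = j then 1 else 0) + a 1 * (if (1:Fin 3) = j then 1 else 0)
              + a 2 * (if (2:Fin 3) = j then 1 else 0)))
          + b * (if m = j then 1 else 0)
          + (c (m+1) * (if m+2 = j then 1 else 0) - c (m+2) * (if m+1 = j then 1 else 0)) := by
      intro m j x
      rw [show (fun y => v y m) = (fun y : V3 => (y 0 * y 0 + y 1 * y 1 + y 2 * y 2) * a m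
          - 2 * (a 0 * y 0 + a 1 * y 1 + a 2 * y 2) * y m + b * y m
          + (c (m+1) * y (m+2) - c (m+2) * y (m+1)) + d m) from funext (hcomp m)]
      exact pd_poly a c d b m j x
    ext p q
    simp only [devm, msym, vgrad, Matrix.sub_apply, Matrix.smul_apply, Matrix.add_apply,
      Matrix.transpose_apply, Matrix.of_apply, Matrix.one_apply, Matrix.trace, Matrix.diag,
      Fin.sum_univ_three, smul_eq_mul, Matrix.zero_apply, hpd]
    fin_cases p <;> fin_cases q <;>
      simp only [fin3_mk0, fin3_mk1, fin3_mk2, fin3_a01, fin3_a02, fin3_a11, fin3_a12,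
        fin3_a21, fin3_a22] <;>
      simp <;> try ring


end
end

section
/- Edge trace identity for the linearized Cotton–York operator: for every C^∞ matrix field τ : ℝ³ → ℝ^{3×3} with symmetric values and every choice of pairwise orthogonal unit vectors t, m, n ∈ ℝ³ with t' := n × m, the identity mᵀ (tr2cott(τ)) m = −tᵀ(curl τ)t + ∂_{t'}(mᵀ τ n) holds at every point of ℝ³. -/
noncomputable section

open Matrix

/-- Directional derivative of a scalar field along a fixed vector w. -/
def pdir (w : V3) (f : V3 → ℝ) : V3 → ℝ := fun x => fderiv ℝ f x w

/-- Entrywise directional derivative of a vector field. -/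
def pdirV (w : V3) (v : V3 → V3) : V3 → V3 := fun x i => pdir w (fun y => v y i) x

/-- Entrywise directional derivative of a matrix field. -/
def pdirM (w : V3) (A : V3 → M3) : V3 → M3 :=
  fun x => Matrix.of fun i j => pdir w (fun y => A y i j) x

/-- Column-wise curl ∇ × A: the j-th column is the curl of the j-th column of A. -/
def colcurl (A : V3 → M3) : V3 → M3 :=
  fun x => Matrix.of fun i j =>
    pd (i + 1) (fun y => A y (i + 2) j) x - pd (i + 2) (fun y => A y (i + 1) j) x

/-- Gradient of a scalar field as a vector field. -/
def gradS (f : V3 → ℝ) : V3 → V3 := fun x i => pd i f x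

/-- Projection matrix Π := I − n nᵀ. -/
def Pm (n : V3) : M3 := 1 - Matrix.vecMulVec n n

/-- Row-wise cross product of a matrix with a vector. -/
def mcrossv (A : M3) (w : V3) : M3 := Matrix.of fun i => cross (A i) w

/-- Surface gradient grad_f w := (grad w) Π. -/
def gradf (n : V3) (w : V3 → V3) : V3 → M3 := fun x => vgrad w x * Pm n

/-- Surface deformation def_f w := sym (grad_f w). -/
def deff (n : V3) (w : V3 → V3) : V3 → M3 := fun x => msym (gradf n w x)

/-- Surface divergence of a matrix field: div_f A := (∂_t A) t + (∂_m A) m. -/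
def divfM (t m : V3) (A : V3 → M3) : V3 → V3 :=
  fun x => (pdirM t A x).mulVec t + (pdirM m A x).mulVec m

/-- Surface divergence of a vector field: div_f w := t·∂_t w + m·∂_m w. -/
def divfV (t m : V3) (w : V3 → V3) : V3 → ℝ :=
  fun x => dotp t (pdirV t w x) + dotp m (pdirV m w x)

/-- Surface deviatoric part dev_f A := ΠAΠ − (1/2) tr(ΠAΠ) Π. -/
def devf (n : V3) (A : M3) : M3 :=
  Pm n * A * Pm n - ((1 / 2 : ℝ) * (Pm n * A * Pm n).trace) • Pm n

/-- tr2inc(τ) := 2 def_f(Πτn) − Π(∂_n τ)Π. -/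
def tr2inc (n : V3) (τ : V3 → M3) : V3 → M3 :=
  fun x => (2 : ℝ) • deff n (fun y => (Pm n * τ y).mulVec n) x - Pm n * pdirM n τ x * Pm n

/-- tr1cott(τ) := sym((Πτ) × n). -/
def tr1cott (n : V3) (τ : V3 → M3) : V3 → M3 :=
  fun x => msym (mcrossv (Pm n * τ x) n)

/-- tr2cott(τ) := sym(tr2inc(τ) × n). -/
def tr2cott (n : V3) (τ : V3 → M3) : V3 → M3 :=
  fun x => msym (mcrossv (tr2inc n τ x) n)

/-- tr3cott(τ) := dev_f(tr2inc(sym curl τ)). -/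
def tr3cott (n : V3) (τ : V3 → M3) : V3 → M3 :=
  fun x => devf n (tr2inc n (fun y => msym (mcurl τ y)) x)

/-- tre2(τ) := 2(∂_t(sym curl τ))t − ∇(tᵀ(curl τ)t). -/
def tre2 (t : V3) (τ : V3 → M3) : V3 → V3 :=
  fun x => (2 : ℝ) • (pdirM t (fun y => msym (mcurl τ y)) x).mulVec t
    - gradS (fun y => dotp t ((mcurl τ y).mulVec t)) x

/-- tre3(τ) := −tᵀ(∇ × (sym curl τ))t − (1/2)∂_t(t·div τ). -/
def tre3 (t : V3) (τ : V3 → M3) : V3 → ℝ :=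
  fun x => -dotp t ((colcurl (fun y => msym (mcurl τ y)) x).mulVec t)
    - (1 / 2 : ℝ) * pdir t (fun y => dotp t (mdiv τ y)) x


lemma pdir_comb (w : V3) (f : V3 → ℝ) (x : V3) : pdir w f x = ∑ k, w k * pd k f x := by
  have hw : w = ∑ k : Fin 3, w k • (Pi.single k 1 : V3) := by
    funext i
    simp [Finset.sum_apply, Pi.single_apply, Fin.sum_univ_three]
  unfold pdir pd
  conv_lhs => rw [hw]
  rw [map_sum]
  simp [smul_eq_mul]

lemma pd_lincomb (τ : V3 → M3) (hτ : ∀ i j, Differentiable ℝ fun y => τ y i j)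
    (c : Fin 3 → Fin 3 → ℝ) (k : Fin 3) (x : V3) :
    pd k (fun y => ∑ a, ∑ b, c a b * τ y a b) x
      = ∑ a, ∑ b, c a b * pd k (fun y => τ y a b) x := by
  unfold pd
  rw [fderiv_fun_sum (fun a _ => DifferentiableAt.fun_sum fun b _ => ((hτ a b) x).const_mul (c a b))]
  rw [ContinuousLinearMap.sum_apply]
  refine Finset.sum_congr rfl fun a _ => ?_
  rw [fderiv_fun_sum (fun b _ => ((hτ a b) x).const_mul (c a b))]
  rw [ContinuousLinearMap.sum_apply]
  refine Finset.sum_congr rfl fun b _ => ?_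
  rw [fderiv_const_mul ((hτ a b) x)]
  simp


lemma alg1 (B : M3) (m n : V3) :
    dotp m ((msym (mcrossv B n)).mulVec m) = dotp (B.mulVec (cross n m)) m := by
  simp only [msym, mcrossv, cross, dotp, Matrix.mulVec, dotProduct, Matrix.smul_apply,
    Matrix.add_apply, Matrix.transpose_apply, Matrix.of_apply, Fin.sum_univ_three,
    smul_eq_mul, Fin.reduceAdd]
  ring

lemma alg2 (G N : M3) (m n : V3) (hmn' : m 0 * n 0 + m 1 * n 1 + m 2 * n 2 = 0) :
    dotp (((2 : ℝ) • msym (G * Pm n) - Pm n * N * Pm n).mulVec (cross n m)) m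
      = dotp (G.mulVec (cross n m)) m + dotp (G.mulVec m) (cross n m)
        - dotp (N.mulVec (cross n m)) m := by
  simp only [msym, cross, dotp, Matrix.mulVec, dotProduct, Matrix.smul_apply, Matrix.add_apply,
    Matrix.sub_apply, Matrix.transpose_apply, Matrix.mul_apply, Matrix.of_apply, Pm,
    Matrix.one_apply, Matrix.vecMulVec_apply, Fin.sum_univ_three, smul_eq_mul,
    Fin.reduceAdd, Fin.reduceEq, ↓reduceIte]
  linear_combination (m 2 * n 1 * n 2 * (N 2 0) + (-1:ℝ) * m 2 * n 1 * n 2 * (G 0 2) + m 2 * n 1 * n 1 * (N 1 0) + (-1:ℝ) * m 2 * n 1 * n 1 * (G 0 1) + (-1:ℝ) * m 2 * n 0 * n 2 * (N 2 1) + m 2 * n 0 * n 2 * (G 1 2) + (-1:ℝ) * m 2 * n 0 * n 1 * (N 1 1) + m 2 * n 0 * n 1 * (N 0 0) + m 2 * n 0 * n 1 * (G 1 1) + (-1:ℝ) * m 2 * n 0 * n 1 * (G 0 0) + (-1:ℝ) * m 2 * n 0 * n 0 * (N 0 1) + m 2 * n 0 * n 0 * (G 1 0) + (-1:ℝ) *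 m 1 * n 2 * n 2 * (N 2 0) + m 1 * n 2 * n 2 * (G 0 2) + (-1:ℝ) * m 1 * n 1 * n 2 * (N 1 0) + m 1 * n 1 * n 2 * (G 0 1) + m 1 * n 0 * n 2 * (N 2 2) + (-1:ℝ) * m 1 * n 0 * n 2 * (N 0 0) + (-1:ℝ) * m 1 * n 0 * n 2 * (G 2 2) + m 1 * n 0 * n 2 * (G 0 0) + m 1 * n 0 * n 1 * (N 1 2) + (-1:ℝ) * m 1 * n 0 * n 1 * (G 2 1) + m 1 * n 0 * n 0 * (N 0 2) + (-1:ℝ) * m 1 * n 0 * n 0 * (G 2 0) + m 0 * n 2 * n 2 * (N 2 1) + (-1:ℝ) * m 0 * n 2 * n 2 * (G 1 2) + (-1:ℝ) * m 0 * n 1 * n 2 * (N 2 2) + m 0 * n 1 * n 2 * (N 1 1) + m 0 * n 1 * n 2 * (G 2 2) + (-1:ℝ) * m 0 * n 1 * n 2 * (G 1 1) + (-1:ℝ) * m 0 * n 1 * n 1 * (N 1 2) + m 0 * n 1 * n 1 * (G 2 1) + m 0 * n 0 * n 2 * (N 0 1) + (-1:ℝ) * m 0 * n 0 * n 2 * (G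 1 0) + (-1:ℝ) * m 0 * n 0 * n 1 * (N 0 2) + m 0 * n 0 * n 1 * (G 2 0)) * hmn'

set_option maxHeartbeats 4000000 in
set_option maxRecDepth 16000 in
/-- edge trace identity mᵀ(tr2cott τ)m = −tᵀ(curl τ)t + ∂_{t'}(mᵀτn). -/
theorem edge_trace_tr2cott_mm (τ : V3 → M3) (hτ : SmoothM τ) (hsym : ∀ x, (τ x)ᵀ = τ x)
    (t m n : V3)
    (ht : dotp t t = 1) (hm : dotp m m = 1) (hn : dotp n n = 1)
    (htm : dotp t m = 0) (htn : dotp t n = 0) (hmn : dotp m n = 0) :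
    ∀ x, dotp m ((tr2cott n τ x).mulVec m) =
      -dotp t ((mcurl τ x).mulVec t)
        + pdir (cross n m) (fun y => dotp m ((τ y).mulVec n)) x := by
  intro x
  have hd : ∀ i j : Fin 3, Differentiable ℝ fun y => τ y i j :=
    fun i j => (hτ i j).differentiable (by simp)
  have hDsym : ∀ (k i j : Fin 3), pd k (fun y => τ y i j) x = pd k (fun y => τ y j i) x := by
    intro k i j
    have h : (fun y => τ y i j) = fun y => τ y j i := by
      funext y
      exact (congrFun (congrFun (hsym y) i) j).symm
    rw [h]
  have h10 : ∀ k : Fin 3, pd k (fun y => τ y 1 0) x = pd k (fun y => τ y 0 1) x :=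
    fun k => hDsym k 1 0
  have h20 : ∀ k : Fin 3, pd k (fun y => τ y 2 0) x = pd k (fun y => τ y 0 2) x :=
    fun k => hDsym k 2 0
  have h21 : ∀ k : Fin 3, pd k (fun y => τ y 2 1) x = pd k (fun y => τ y 1 2) x :=
    fun k => hDsym k 2 1
  have ht' : t 0 * t 0 + t 1 * t 1 + t 2 * t 2 = 1 := by
    simpa [dotp, Fin.sum_univ_three] using ht
  have hm' : m 0 * m 0 + m 1 * m 1 + m 2 * m 2 = 1 := by
    simpa [dotp, Fin.sum_univ_three] using hm
  have hn' : n 0 * n 0 + n 1 * n 1 + n 2 * n 2 = 1 := by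
    simpa [dotp, Fin.sum_univ_three] using hn
  have htm' : t 0 * m 0 + t 1 * m 1 + t 2 * m 2 = 0 := by
    simpa [dotp, Fin.sum_univ_three] using htm
  have htn' : t 0 * n 0 + t 1 * n 1 + t 2 * n 2 = 0 := by
    simpa [dotp, Fin.sum_univ_three] using htn
  have hmn' : m 0 * n 0 + m 1 * n 1 + m 2 * n 2 = 0 := by
    simpa [dotp, Fin.sum_univ_three] using hmn
  obtain ⟨c, hc⟩ : ∃ r : ℝ, r = t 0 * (n 1 * m 2 - n 2 * m 1) + t 1 * (n 2 * m 0 - n 0 * m 2)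
      + t 2 * (n 0 * m 1 - n 1 * m 0) := ⟨_, rfl⟩
  have hc2 : c * c = 1 := by
    linear_combination (c + (t 0 * (n 1 * m 2 - n 2 * m 1) + t 1 * (n 2 * m 0 - n 0 * m 2)
        + t 2 * (n 0 * m 1 - n 1 * m 0))) * hc
      + ((n 0 * n 0 + n 1 * n 1 + n 2 * n 2) * (m 0 * m 0 + m 1 * m 1 + m 2 * m 2)) * ht'
      + (m 0 * m 0 + m 1 * m 1 + m 2 * m 2) * hn' + hm'
      - ((t 0 * n 0 + t 1 * n 1 + t 2 * n 2) * (m 0 * m 0 + m 1 * m 1 + m 2 * m 2)) * htn'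
      + (2 * (t 0 * n 0 + t 1 * n 1 + t 2 * n 2) * (m 0 * n 0 + m 1 * n 1 + m 2 * n 2)
          - (t 0 * m 0 + t 1 * m 1 + t 2 * m 2) * (n 0 * n 0 + n 1 * n 1 + n 2 * n 2)) * htm'
      - ((m 0 * n 0 + m 1 * n 1 + m 2 * n 2) * (t 0 * t 0 + t 1 * t 1 + t 2 * t 2)) * hmn'
  have hw0 : n 1 * m 2 - n 2 * m 1 = c * t 0 := by
    linear_combination (-(n 1 * m 2 - n 2 * m 1)) * ht' + (-(t 1 * n 2 - t 2 * n 1)) * htm'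
      + (t 1 * m 2 - t 2 * m 1) * htn' + (-(t 0)) * hc
  have hw1 : n 2 * m 0 - n 0 * m 2 = c * t 1 := by
    linear_combination (-(n 2 * m 0 - n 0 * m 2)) * ht' + (-(t 2 * n 0 - t 0 * n 2)) * htm'
      + (t 2 * m 0 - t 0 * m 2) * htn' + (-(t 1)) * hc
  have hw2 : n 0 * m 1 - n 1 * m 0 = c * t 2 := by
    linear_combination (-(n 0 * m 1 - n 1 * m 0)) * ht' + (-(t 0 * n 1 - t 1 * n 0)) * htm'
      + (t 0 * m 1 - t 1 * m 0) * htn' + (-(t 2)) * hc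
  have hu : cross n m = c • t := by
    funext i
    fin_cases i
    · simpa [cross, Pi.smul_apply, smul_eq_mul] using hw0
    · simpa [cross, Pi.smul_apply, smul_eq_mul] using hw1
    · simpa [cross, Pi.smul_apply, smul_eq_mul] using hw2
  have htt : dotp t ((mcurl τ x).mulVec t)
      = dotp (cross n m) ((mcurl τ x).mulVec (cross n m)) := by
    rw [hu]
    simp only [dotp, Matrix.mulVec, dotProduct, Pi.smul_apply, smul_eq_mul, Fin.sum_univ_three]
    linear_combination (-(t 0 * (mcurl τ x 0 0 * t 0 + mcurl τ x 0 1 * t 1 + mcurl τ x 0 2 * t 2)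
      + t 1 * (mcurl τ x 1 0 * t 0 + mcurl τ x 1 1 * t 1 + mcurl τ x 1 2 * t 2)
      + t 2 * (mcurl τ x 2 0 * t 0 + mcurl τ x 2 1 * t 1 + mcurl τ x 2 2 * t 2))) * hc2
  have hvg : vgrad (fun y => (Pm n * τ y).mulVec n) x
      = Matrix.of fun i j => ∑ a, ∑ b, (Pm n i a * n b) * pd j (fun y => τ y a b) x := by
    ext i j
    show pd j (fun y => ((Pm n * τ y).mulVec n) i) x = _
    have h : (fun y => ((Pm n * τ y).mulVec n) i)
        = fun y => ∑ a, ∑ b, (Pm n i a * n b) * τ y a b := by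
      funext y
      simp only [Matrix.mulVec, Matrix.mul_apply, dotProduct, Fin.sum_univ_three]
      ring
    rw [h, pd_lincomb τ hd (fun a b => Pm n i a * n b) j x]
    rfl
  have hpM : pdirM n τ x = Matrix.of fun i j => ∑ k, n k * pd k (fun y => τ y i j) x := by
    ext i j
    exact pdir_comb n (fun y => τ y i j) x
  have hpd : pdir (cross n m) (fun y => dotp m ((τ y).mulVec n)) x
      = ∑ k, cross n m k * ∑ i, ∑ j, (m i * n j) * pd k (fun y => τ y i j) x := by
    rw [pdir_comb]
    refine Finset.sum_congr rfl fun k _ => ?_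
    have h : (fun y => dotp m ((τ y).mulVec n)) = fun y => ∑ i, ∑ j, (m i * n j) * τ y i j := by
      funext y
      simp only [dotp, Matrix.mulVec, dotProduct, Fin.sum_univ_three]
      ring
    rw [h, pd_lincomb τ hd (fun i j => m i * n j) k x]
  rw [htt, hpd]
  simp only [tr2cott]
  rw [alg1]
  simp only [tr2inc, deff, gradf, hvg, hpM]
  rw [alg2 _ _ m n hmn']
  simp (config := { maxSteps := 10000000 }) only [dotp, Matrix.mulVec, dotProduct,
    Matrix.of_apply, Pm, Matrix.sub_apply, Matrix.one_apply, Matrix.vecMulVec_apply,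
    cross, mcurl, Fin.sum_univ_three, Fin.reduceAdd, Fin.reduceEq, ↓reduceIte]
  linear_combination ((-1:ℝ) * m 2 * n 1 * n 2 * n 2 * (pd 0 (fun y => τ y 2 2) x) + (-2:ℝ) * m 2 * n 1 * n 1 * n 2 * (pd 0 (fun y => τ y 1 2) x) + (-1:ℝ) * m 2 * n 1 * n 1 * n 1 * (pd 0 (fun y => τ y 1 1) x) + m 2 * n 0 * n 2 * n 2 * (pd 1 (fun y => τ y 2 2) x) + 2 * m 2 * n 0 * n 1 * n 2 * (pd 1 (fun y => τ y 1 2) x) + (-2:ℝ) * m 2 * n 0 * n 1 * n 2 * (pd 0 (fun y => τ y 0 2) x) + m 2 * n 0 * n 1 * n 1 * (pd 1 (fun y => τ y 1 1) x) + (-2:ℝ) * m 2 * n 0 * n 1 * n 1 * (pd 0 (fun y => τ y 0 1) x) + 2 * m 2 * n 0 * n 0 * n 2 * (pd 1 (fun y => τ y 0 2) x) + 2 * m 2 * n 0 * n 0 * n 1 * (pd 1 (fun y => τ y 0 1) x) + (-1:ℝ) * m 2 * n 0 * n 0 * n 1 * (pd 0 (fun y => τ y 0 0) x) + m 2 * n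 0 * n 0 * n 0 * (pd 1 (fun y => τ y 0 0) x) + m 1 * n 2 * n 2 * n 2 * (pd 0 (fun y => τ y 2 2) x) + 2 * m 1 * n 1 * n 2 * n 2 * (pd 0 (fun y => τ y 1 2) x) + m 1 * n 1 * n 1 * n 2 * (pd 0 (fun y => τ y 1 1) x) + (-1:ℝ) * m 1 * n 0 * n 2 * n 2 * (pd 2 (fun y => τ y 2 2) x) + 2 * m 1 * n 0 * n 2 * n 2 * (pd 0 (fun y => τ y 0 2) x) + (-2:ℝ) * m 1 * n 0 * n 1 * n 2 * (pd 2 (fun y => τ y 1 2) x) + 2 * m 1 * n 0 * n 1 * n 2 * (pd 0 (fun y => τ y 0 1) x) + (-1:ℝ) * m 1 * n 0 * n 1 * n 1 * (pd 2 (fun y => τ y 1 1) x) + (-2:ℝ) * m 1 * n 0 * n 0 * n 2 * (pd 2 (fun y => τ y 0 2) x) + m 1 * n 0 * n 0 * n 2 * (pd 0 (fun y => τ y 0 0) x) + (-2:ℝ) * m 1 * n 0 * n 0 * n 1 * (pd 2 (fun y => τ y 0 1) x) + (-1:ℝ) * m 1 * n 0 * n 0 * n 0 * (pd 2 (fun y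 => τ y 0 0) x) + (-1:ℝ) * m 0 * n 2 * n 2 * n 2 * (pd 1 (fun y => τ y 2 2) x) + m 0 * n 1 * n 2 * n 2 * (pd 2 (fun y => τ y 2 2) x) + (-2:ℝ) * m 0 * n 1 * n 2 * n 2 * (pd 1 (fun y => τ y 1 2) x) + 2 * m 0 * n 1 * n 1 * n 2 * (pd 2 (fun y => τ y 1 2) x) + (-1:ℝ) * m 0 * n 1 * n 1 * n 2 * (pd 1 (fun y => τ y 1 1) x) + m 0 * n 1 * n 1 * n 1 * (pd 2 (fun y => τ y 1 1) x) + (-2:ℝ) * m 0 * n 0 * n 2 * n 2 * (pd 1 (fun y => τ y 0 2) x) + 2 * m 0 * n 0 * n 1 * n 2 * (pd 2 (fun y => τ y 0 2) x) + (-2:ℝ) * m 0 * n 0 * n 1 * n 2 * (pd 1 (fun y => τ y 0 1) x) + 2 * m 0 * n 0 * n 1 * n 1 * (pd 2 (fun y => τ y 0 1) x) + (-1:ℝ) * m 0 * n 0 * n 0 * n 2 * (pd 1 (fun y => τ y 0 0) x) + m 0 * n 0 * n 0 * n 1 * (pd 2 (fun y => τ y 0 0) x)) * hmn'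
      + ((-1:ℝ) * m 2 * m 2 * n 0 * n 1 * n 1 * n 2 + (-1:ℝ) * m 1 * m 2 * n 0 * n 1 + m 1 * m 2 * n 0 * n 1 * n 2 * n 2 + (-1:ℝ) * m 1 * m 2 * n 0 * n 1 * n 1 * n 1 + m 1 * m 1 * n 0 * n 2 + m 1 * m 1 * n 0 * n 1 * n 1 * n 2 + (-1:ℝ) * m 0 * m 2 * n 0 * n 0 + (-1:ℝ) * m 0 * m 2 * n 0 * n 0 * n 1 * n 1 + m 0 * m 1 * n 0 * n 0 * n 1 * n 2 + m 0 * m 0 * n 0 * n 2) * hDsym 0 1 0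
      + ((-1:ℝ) * m 2 * m 2 * n 0 * n 1 + (-1:ℝ) * m 2 * m 2 * n 0 * n 1 * n 2 * n 2 + m 1 * m 2 * n 0 * n 2 + m 1 * m 2 * n 0 * n 2 * n 2 * n 2 + (-1:ℝ) * m 1 * m 2 * n 0 * n 1 * n 1 * n 2 + m 1 * m 1 * n 0 * n 1 * n 2 * n 2 + (-1:ℝ) * m 0 * m 2 * n 0 * n 0 * n 1 * n 2 + m 0 * m 1 * n 0 * n 0 + m 0 * m 1 * n 0 * n 0 * n 2 * n 2 + (-1:ℝ) * m 0 * m 0 * n 0 * n 1) * hDsym 0 2 0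
      + ((-1:ℝ) * m 2 * m 2 * n 1 * n 1 * n 2 * n 2 + m 2 * m 2 * n 0 * n 0 + m 1 * m 2 * n 1 * n 2 * n 2 * n 2 + (-1:ℝ) * m 1 * m 2 * n 1 * n 1 * n 1 * n 2 + m 1 * m 1 * n 1 * n 1 * n 2 * n 2 + m 1 * m 1 * n 0 * n 0 + (-1:ℝ) * m 0 * m 2 * n 0 * n 2 + (-1:ℝ) * m 0 * m 2 * n 0 * n 1 * n 1 * n 2 + (-1:ℝ) * m 0 * m 1 * n 0 * n 1 + m 0 * m 1 * n 0 * n 1 * n 2 * n 2) * hDsym 0 2 1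
      + (m 2 * m 2 * n 0 * n 0 * n 1 * n 2 + (-1:ℝ) * m 1 * m 2 * n 1 * n 1 + m 1 * m 2 * n 0 * n 0 * n 1 * n 1 + m 1 * m 1 * n 1 * n 2 + (-1:ℝ) * m 0 * m 2 * n 0 * n 1 + (-1:ℝ) * m 0 * m 2 * n 0 * n 1 * n 2 * n 2 + m 0 * m 2 * n 0 * n 0 * n 0 * n 1 + (-1:ℝ) * m 0 * m 1 * n 0 * n 1 * n 1 * n 2 + m 0 * m 0 * n 1 * n 2 + (-1:ℝ) * m 0 * m 0 * n 0 * n 0 * n 1 * n 2) * hDsym 1 1 0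
      + ((-1:ℝ) * m 2 * m 2 * n 1 * n 1 + m 2 * m 2 * n 0 * n 0 * n 2 * n 2 + m 1 * m 2 * n 1 * n 2 + m 1 * m 2 * n 0 * n 0 * n 1 * n 2 + (-1:ℝ) * m 0 * m 2 * n 0 * n 2 * n 2 * n 2 + m 0 * m 2 * n 0 * n 0 * n 0 * n 2 + m 0 * m 1 * n 0 * n 1 + (-1:ℝ) * m 0 * m 1 * n 0 * n 1 * n 2 * n 2 + (-1:ℝ) * m 0 * m 0 * n 1 * n 1 + (-1:ℝ) * m 0 * m 0 * n 0 * n 0 * n 2 * n 2) * hDsym 1 2 0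
      + (m 2 * m 2 * n 0 * n 1 + m 2 * m 2 * n 0 * n 1 * n 2 * n 2 + m 1 * m 2 * n 0 * n 1 * n 1 * n 2 + m 1 * m 1 * n 0 * n 1 + (-1:ℝ) * m 0 * m 2 * n 1 * n 2 + (-1:ℝ) * m 0 * m 2 * n 1 * n 2 * n 2 * n 2 + m 0 * m 2 * n 0 * n 0 * n 1 * n 2 + (-1:ℝ) * m 0 * m 1 * n 1 * n 1 + (-1:ℝ) * m 0 * m 1 * n 1 * n 1 * n 2 * n 2 + (-1:ℝ) * m 0 * m 0 * n 0 * n 1 * n 2 * n 2) * hDsym 1 2 1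
      + ((-1:ℝ) * m 1 * m 2 * n 1 * n 2 + (-1:ℝ) * m 1 * m 2 * n 0 * n 0 * n 1 * n 2 + m 1 * m 1 * n 2 * n 2 + (-1:ℝ) * m 1 * m 1 * n 0 * n 0 * n 1 * n 1 + (-1:ℝ) * m 0 * m 2 * n 0 * n 2 + m 0 * m 2 * n 0 * n 1 * n 1 * n 2 + m 0 * m 1 * n 0 * n 1 * n 1 * n 1 + (-1:ℝ) * m 0 * m 1 * n 0 * n 0 * n 0 * n 1 + m 0 * m 0 * n 2 * n 2 + m 0 * m 0 * n 0 * n 0 * n 1 * n 1) * hDsym 2 1 0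
      + ((-1:ℝ) * m 2 * m 2 * n 1 * n 2 + m 1 * m 2 * n 2 * n 2 + (-1:ℝ) * m 1 * m 2 * n 0 * n 0 * n 2 * n 2 + (-1:ℝ) * m 1 * m 1 * n 0 * n 0 * n 1 * n 2 + m 0 * m 2 * n 0 * n 1 * n 2 * n 2 + m 0 * m 1 * n 0 * n 2 + m 0 * m 1 * n 0 * n 1 * n 1 * n 2 + (-1:ℝ) * m 0 * m 1 * n 0 * n 0 * n 0 * n 2 + (-1:ℝ) * m 0 * m 0 * n 1 * n 2 + m 0 * m 0 * n 0 * n 0 * n 1 * n 2) * hDsym 2 2 0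
      + (m 2 * m 2 * n 0 * n 2 + (-1:ℝ) * m 1 * m 2 * n 0 * n 1 * n 2 * n 2 + m 1 * m 1 * n 0 * n 2 + (-1:ℝ) * m 1 * m 1 * n 0 * n 1 * n 1 * n 2 + (-1:ℝ) * m 0 * m 2 * n 2 * n 2 + m 0 * m 2 * n 1 * n 1 * n 2 * n 2 + (-1:ℝ) * m 0 * m 1 * n 1 * n 2 + m 0 * m 1 * n 1 * n 1 * n 1 * n 2 + (-1:ℝ) * m 0 * m 1 * n 0 * n 0 * n 1 * n 2 + m 0 * m 0 * n 0 * n 1 * n 1 * n 2) * hDsym 2 2 1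

end
end

section
/- Surjectivity of div div in the polynomial conformal Hessian complex: let k ≥ 2 be an integer. For every scalar polynomial q ∈ P_{k−2} on ℝ³ there exists a matrix field τ ∈ P_k(S∩T) (entries polynomial of total degree at most k, values symmetric and traceless) such that div(div τ) = q identically on ℝ³. -/
noncomputable section

open Matrix

section DivDivHelpers
open MvPolynomial

lemma hasFDerivAt_mvpoly (p : MvPolynomial (Fin 3) ℝ) (x : V3) :
    HasFDerivAt (fun y : V3 => eval y p)
      (∑ i, eval x (pderiv i p) • ContinuousLinearMap.proj (R := ℝ) (φ := fun _ : Fin 3 => ℝ) i) x := by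
  induction p using MvPolynomial.induction_on with
  | C a =>
      simp only [eval_C, pderiv_C, map_zero, zero_smul, Finset.sum_const_zero]
      exact hasFDerivAt_const a x
  | add p q hp hq =>
      have := hp.add hq
      convert this using 1 <;> try with_reducible_and_instances rfl
      · ext y; simp
      · simp [map_add, add_smul, Finset.sum_add_distrib]
  | mul_X p i hp =>
      have h1 : HasFDerivAt (fun y : V3 => y i)
          (ContinuousLinearMap.proj (R := ℝ) (φ := fun _ : Fin 3 => ℝ) i) x := by
        exact hasFDerivAt_apply i x
      have := hp.mul h1
      convert this using 1 <;> try with_reducible_and_instances rfl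
      · ext y; simp
      · ext v
        simp only [pderiv_mul, pderiv_X, eval_add, eval_mul, eval_X,
          ContinuousLinearMap.sum_apply, ContinuousLinearMap.smul_apply,
          ContinuousLinearMap.proj_apply, ContinuousLinearMap.add_apply,
          smul_eq_mul, Pi.single_apply, apply_ite (eval x), _root_.map_one, _root_.map_zero,
          mul_ite, ite_mul, mul_one, mul_zero, zero_mul, add_mul,
          Finset.sum_add_distrib, Finset.sum_ite_eq', Finset.mem_univ, if_true,
          Finset.mul_sum]
        rw [Finset.sum_ite_eq]
        simp only [Finset.mem_univ, if_true]
        rw [add_comm]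
        congr 1
        exact Finset.sum_congr rfl fun j _ => by ring

lemma pd_eval (p : MvPolynomial (Fin 3) ℝ) (i : Fin 3) (x : V3) :
    pd i (fun y => eval y p) x = eval x (pderiv i p) := by
  rw [pd, (hasFDerivAt_mvpoly p x).fderiv]
  simp [Pi.single_apply, Finset.sum_ite_eq]

def anti (p : MvPolynomial (Fin 3) ℝ) : MvPolynomial (Fin 3) ℝ :=
  ∑ α ∈ p.support, monomial (α + Finsupp.single 0 1 + Finsupp.single 1 1)
    (p.coeff α / (((α 0 : ℝ) + 1) * ((α 1 : ℝ) + 1)))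

lemma finsupp_sub01 (α : Fin 3 →₀ ℕ) :
    α + Finsupp.single 0 1 + Finsupp.single 1 1 - Finsupp.single 0 1 = α + Finsupp.single 1 1 := by
  ext a
  simp only [Finsupp.tsub_apply, Finsupp.add_apply, Finsupp.single_apply]
  omega

lemma finsupp_sub10 (α : Fin 3 →₀ ℕ) :
    α + Finsupp.single 0 1 + Finsupp.single 1 1 - Finsupp.single 1 1 = α + Finsupp.single 0 1 := by
  ext a
  simp only [Finsupp.tsub_apply, Finsupp.add_apply, Finsupp.single_apply]
  omega

lemma finsupp_sub0 (α : Fin 3 →₀ ℕ) :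
    α + Finsupp.single 0 1 - Finsupp.single 0 1 = α := by
  ext a
  simp only [Finsupp.tsub_apply, Finsupp.add_apply, Finsupp.single_apply]
  omega

lemma finsupp_sub1 (α : Fin 3 →₀ ℕ) :
    α + Finsupp.single 1 1 - Finsupp.single 1 1 = α := by
  ext a
  simp only [Finsupp.tsub_apply, Finsupp.add_apply, Finsupp.single_apply]
  omega

lemma pderiv_monomial_anti (α : Fin 3 →₀ ℕ) (c : ℝ) :
    pderiv 0 (pderiv 1 (monomial (α + Finsupp.single 0 1 + Finsupp.single 1 1)
      (c / (((α 0 : ℝ) + 1) * ((α 1 : ℝ) + 1))))) = monomial α c ∧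
    pderiv 1 (pderiv 0 (monomial (α + Finsupp.single 0 1 + Finsupp.single 1 1)
      (c / (((α 0 : ℝ) + 1) * ((α 1 : ℝ) + 1))))) = monomial α c := by
  have h0 : (α + Finsupp.single 0 1 + Finsupp.single 1 1 : Fin 3 →₀ ℕ) 0 = α 0 + 1 := by
    simp [Finsupp.add_apply, Finsupp.single_apply]
  have h1 : (α + Finsupp.single 0 1 + Finsupp.single 1 1 : Fin 3 →₀ ℕ) 1 = α 1 + 1 := by
    simp [Finsupp.add_apply, Finsupp.single_apply]
  have hα0 : ((α 0 : ℝ) + 1) ≠ 0 := by positivity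
  have hα1 : ((α 1 : ℝ) + 1) ≠ 0 := by positivity
  constructor
  · rw [pderiv_monomial, h1, finsupp_sub10, pderiv_monomial]
    have : (α + Finsupp.single 0 1 : Fin 3 →₀ ℕ) 0 = α 0 + 1 := by
      simp [Finsupp.add_apply, Finsupp.single_apply]
    rw [this, finsupp_sub0]
    congr 1
    push_cast
    field_simp
  · rw [pderiv_monomial, h0, finsupp_sub01, pderiv_monomial]
    have : (α + Finsupp.single 1 1 : Fin 3 →₀ ℕ) 1 = α 1 + 1 := by
      simp [Finsupp.add_apply, Finsupp.single_apply]
    rw [this, finsupp_sub1]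
    congr 1
    push_cast
    field_simp

lemma pderiv01_anti (p : MvPolynomial (Fin 3) ℝ) :
    pderiv 0 (pderiv 1 (anti p)) = p ∧ pderiv 1 (pderiv 0 (anti p)) = p := by
  unfold anti
  constructor
  · rw [map_sum, map_sum]
    exact (Finset.sum_congr rfl fun α _ => (pderiv_monomial_anti α _).1).trans p.as_sum.symm
  · rw [map_sum, map_sum]
    exact (Finset.sum_congr rfl fun α _ => (pderiv_monomial_anti α _).2).trans p.as_sum.symm

lemma anti_totalDegree (p : MvPolynomial (Fin 3) ℝ) :
    (anti p).totalDegree ≤ p.totalDegree + 2 := by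
  unfold anti
  refine (totalDegree_finset_sum _ _).trans ?_
  refine Finset.sup_le fun α hα => ?_
  refine (totalDegree_monomial_le _ _).trans ?_
  have : (α + Finsupp.single 0 1 + Finsupp.single 1 1).sum (fun _ n => n)
      = α.sum (fun _ n => n) + 2 := by
    rw [Finsupp.sum_add_index' (fun _ => rfl) (fun _ _ _ => rfl),
        Finsupp.sum_add_index' (fun _ => rfl) (fun _ _ _ => rfl),
        Finsupp.sum_single_index rfl, Finsupp.sum_single_index rfl]
  rw [show (fun (_ : Fin 3) => (id : ℕ → ℕ)) = (fun (_ : Fin 3) (n : ℕ) => n) from rfl, this]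
  have := le_totalDegree hα
  omega

end DivDivHelpers

/-- surjectivity of div div in the polynomial conformal Hessian complex. -/
theorem poly_divdiv_surjective (k : ℕ) (hk : 2 ≤ k) (q : V3 → ℝ) (hq : PolyLe (k - 2) q) :
    ∃ τ : V3 → M3, PolyLeST k τ ∧ ∀ x, vdiv (mdiv τ) x = q x := by
  classical
  obtain ⟨p, hdeg, hpq⟩ := hq
  set rr : MvPolynomial (Fin 3) ℝ := MvPolynomial.C (1/2 : ℝ) * anti p with hrr
  set E : Fin 3 → Fin 3 → MvPolynomial (Fin 3) ℝ :=
    fun i j => if (i = 0 ∧ j = 1) ∨ (i = 1 ∧ j = 0) then rr else 0 with hE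
  set τ : V3 → M3 := fun z => Matrix.of fun i j => MvPolynomial.eval z (E i j) with hτ
  have hdr : rr.totalDegree ≤ k := by
    have h1 : rr.totalDegree ≤ (MvPolynomial.C (1/2 : ℝ)).totalDegree + (anti p).totalDegree :=
      MvPolynomial.totalDegree_mul _ _
    have h2 := anti_totalDegree p
    have h3 : (MvPolynomial.C (1/2 : ℝ) : MvPolynomial (Fin 3) ℝ).totalDegree = 0 :=
      MvPolynomial.totalDegree_C _
    omega
  refine ⟨τ, ⟨?_, ?_, ?_⟩, ?_⟩
  · intro i j
    refine ⟨E i j, ?_, fun x => rfl⟩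
    by_cases h : (i = 0 ∧ j = 1) ∨ (i = 1 ∧ j = 0)
    · rw [hE]; simp only [if_pos h]; exact hdr
    · rw [hE]; simp only [if_neg h, MvPolynomial.totalDegree_zero]; exact Nat.zero_le _
  · intro x
    ext i j
    have : E j i = E i j := by fin_cases i <;> fin_cases j <;> simp [hE]
    simp [hτ, Matrix.transpose_apply, this]
  · intro x
    simp [hτ, Matrix.trace, Matrix.diag, Fin.sum_univ_three, hE]
  · intro x
    have hmdiv : ∀ i, (fun y => mdiv τ y i) = fun y => MvPolynomial.eval y (∑ j, MvPolynomial.pderiv j (E i j)) := by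
      intro i
      funext y
      rw [mdiv, map_sum]
      exact Finset.sum_congr rfl fun j _ => pd_eval (E i j) j y
    have step : vdiv (mdiv τ) x
        = MvPolynomial.eval x (∑ i, MvPolynomial.pderiv i (∑ j, MvPolynomial.pderiv j (E i j))) := by
      rw [vdiv, map_sum]
      exact Finset.sum_congr rfl fun i _ => by rw [hmdiv i, pd_eval]
    rw [step]
    have hsum : (∑ i, MvPolynomial.pderiv i (∑ j, MvPolynomial.pderiv j (E i j)))
        = MvPolynomial.pderiv 0 (MvPolynomial.pderiv 1 rr)
          + MvPolynomial.pderiv 1 (MvPolynomial.pderiv 0 rr) := by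
      rw [Fin.sum_univ_three]
      simp [hE, Fin.sum_univ_three]
    rw [hsum, hrr]
    rw [MvPolynomial.pderiv_C_mul, MvPolynomial.pderiv_C_mul,
        MvPolynomial.pderiv_C_mul, MvPolynomial.pderiv_C_mul,
        (pderiv01_anti p).1, (pderiv01_anti p).2]
    rw [hpq x]
    simp only [map_add, MvPolynomial.eval_mul, MvPolynomial.eval_C]
    ring

end
end

section
/- Exactness of the polynomial conformal Hessian complex at the sym curl stage: let k be a natural number. A matrix field τ ∈ P_{k+1}(S∩T) satisfies sym(curl τ) = 0 identically on ℝ³ if and only if there exists a scalar polynomial u ∈ P_{k+3} with τ = dev(hess u). -/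
noncomputable section

open Matrix

namespace PCH
open MvPolynomial Finset

abbrev P := MvPolynomial (Fin 3) ℝ


open MvPolynomial Finset

lemma degree_eq_sum_univ (α : Fin 3 →₀ ℕ) : α.degree = ∑ i, α i :=
  Finset.sum_subset (Finset.subset_univ _) (by
    intro i _ hi
    simpa [Finsupp.notMem_support_iff] using hi)

lemma sub_single_apply (α : Fin 3 →₀ ℕ) (j i : Fin 3) (h : i ≠ j) :
    ((α - Finsupp.single j 1 : Fin 3 →₀ ℕ)) i = α i := by
  rw [Finsupp.tsub_apply, Finsupp.single_apply]
  simp [h.symm]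

lemma degree_sub_single (α : Fin 3 →₀ ℕ) (j : Fin 3) (h : α j ≠ 0) :
    α.degree = ((α - Finsupp.single j 1 : Fin 3 →₀ ℕ)).degree + 1 := by
  rw [degree_eq_sum_univ, degree_eq_sum_univ]
  have hpt : ∀ i, α i = ((α - Finsupp.single j 1 : Fin 3 →₀ ℕ)) i + (Finsupp.single j 1 : Fin 3 →₀ ℕ) i := by
    intro i
    rw [Finsupp.tsub_apply]
    rcases eq_or_ne i j with rfl | hij
    · simp [Finsupp.single_apply]; omega
    · simp [Finsupp.single_apply, hij.symm]
  calc ∑ i, α i = ∑ i, (((α - Finsupp.single j 1 : Fin 3 →₀ ℕ)) i + (Finsupp.single j 1 : Fin 3 →₀ ℕ) i) :=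
        Finset.sum_congr rfl fun i _ => hpt i
    _ = (∑ i, ((α - Finsupp.single j 1 : Fin 3 →₀ ℕ)) i) + ∑ i, (Finsupp.single j 1 : Fin 3 →₀ ℕ) i :=
        Finset.sum_add_distrib
    _ = (∑ i, ((α - Finsupp.single j 1 : Fin 3 →₀ ℕ)) i) + 1 := by
        congr 1
        simp [Finsupp.single_apply]

lemma pderiv_comm (i j : Fin 3) (p : P) :
    pderiv i (pderiv j p) = pderiv j (pderiv i p) := by
  induction p using MvPolynomial.induction_on' with
  | add p q hp hq => simp [hp, hq]
  | monomial α c =>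
    rcases eq_or_ne i j with rfl | hij
    · rfl
    · simp only [pderiv_monomial]
      rw [tsub_right_comm, sub_single_apply α j i hij, sub_single_apply α i j hij.symm]
      congr 1
      ring


open MvPolynomial Finset

lemma homogeneousComponent_monomial (d : ℕ) (α : Fin 3 →₀ ℕ) (c : ℝ) :
    homogeneousComponent d (monomial α c) = if α.degree = d then monomial α c else 0 := by
  rw [homogeneousComponent_of_mem ((mem_homogeneousSubmodule α.degree (monomial α c)).2
    (isHomogeneous_monomial c rfl))]
  rcases eq_or_ne α.degree d with h | h
  · simp [h]
  · simp [h, Ne.symm h]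

lemma X_mul_pderiv_monomial (i : Fin 3) (α : Fin 3 →₀ ℕ) (c : ℝ) :
    X i * pderiv i (monomial α c) = α i • monomial α c := by
  rcases Nat.eq_zero_or_pos (α i) with h0 | h0
  · simp [pderiv_monomial, h0]
  · have hX : (X i : P) = monomial (Finsupp.single i 1) 1 := by
      rw [← X_pow_eq_monomial, pow_one]
    rw [pderiv_monomial, hX, monomial_mul, one_mul]
    have h1 : Finsupp.single i 1 + (α - Finsupp.single i 1) = α :=
      add_tsub_cancel_of_le (Finsupp.single_le_iff.2 h0)
    rw [h1]
    rw [MvPolynomial.smul_monomial]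
    congr 1
    push_cast [nsmul_eq_mul]
    ring

lemma euler_monomial (α : Fin 3 →₀ ℕ) (c : ℝ) :
    ∑ i, X i * pderiv i (monomial α c) = α.degree • monomial α c := by
  simp_rw [X_mul_pderiv_monomial, degree_eq_sum_univ]
  rw [Finset.sum_smul]

lemma euler_hc (d : ℕ) (p : P) :
    ∑ i, X i * pderiv i (homogeneousComponent d p) = d • homogeneousComponent d p := by
  induction p using MvPolynomial.induction_on' with
  | monomial α c =>
    rw [homogeneousComponent_monomial]
    split_ifs with h
    · rw [euler_monomial, h]
    · simp
  | add p q hp hq =>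
    simp only [map_add, mul_add, Finset.sum_add_distrib, hp, hq, smul_add]

lemma pderiv_hc (j : Fin 3) (d : ℕ) (p : P) :
    pderiv j (homogeneousComponent (d + 1) p) = homogeneousComponent d (pderiv j p) := by
  induction p using MvPolynomial.induction_on' with
  | monomial α c =>
    by_cases h0 : α j = 0
    · rw [homogeneousComponent_monomial]
      split_ifs <;> simp [pderiv_monomial, h0]
    · rw [homogeneousComponent_monomial, pderiv_monomial, homogeneousComponent_monomial]
      have hd := degree_sub_single α j h0
      split_ifs with h1 h2 h2
      · rw [pderiv_monomial]
      · omega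
      · omega
      · simp
  | add p q hp hq => simp only [map_add, hp, hq]

lemma pderiv_hc_zero (j : Fin 3) (p : P) :
    pderiv j (homogeneousComponent 0 p) = 0 := by
  rw [homogeneousComponent_zero, pderiv_C]

lemma finsupp_sum_eq_degree (α : Fin 3 →₀ ℕ) : (α.sum fun _ e => e) = α.degree := rfl

lemma totalDegree_pderiv_le (j : Fin 3) (p : P) {n : ℕ} (h : p.totalDegree ≤ n + 1) :
    (pderiv j p).totalDegree ≤ n := by
  conv_lhs => rw [p.as_sum]
  rw [map_sum]
  refine (totalDegree_finset_sum _ _).trans (Finset.sup_le fun α hα => ?_)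
  rw [pderiv_monomial]
  by_cases h0 : α j = 0
  · simp [h0]
  · refine (totalDegree_monomial_le _ _).trans ?_
    show ((α - Finsupp.single j 1 : Fin 3 →₀ ℕ)).degree ≤ n
    have h1 := degree_sub_single α j h0
    have h2 : α.degree ≤ n + 1 := (le_totalDegree hα).trans h
    omega

lemma sum_hc (N : ℕ) (p : P) (h : p.totalDegree ≤ N) :
    ∑ d ∈ Finset.range (N + 1), homogeneousComponent d p = p := by
  have h1 : Finset.range (p.totalDegree + 1) ⊆ Finset.range (N + 1) :=
    Finset.range_subset_range.2 (by omega)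
  conv_rhs => rw [← p.sum_homogeneousComponent]
  refine (Finset.sum_subset h1 fun d _ hd => homogeneousComponent_eq_zero d p ?_).symm
  rw [Finset.mem_range, not_lt] at hd
  omega

theorem poincare {N : ℕ} (w : Fin 3 → P) (hdeg : ∀ i, (w i).totalDegree ≤ N)
    (hcl : ∀ i j, pderiv i (w j) = pderiv j (w i)) :
    ∃ q : P, q.totalDegree ≤ N + 1 ∧ ∀ j, pderiv j q = w j := by
  refine ⟨∑ d ∈ Finset.range (N + 1), (((d : ℝ) + 1)⁻¹) • ∑ i, X i * homogeneousComponent d (w i),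
    ?_, ?_⟩
  · refine (totalDegree_finset_sum _ _).trans (Finset.sup_le fun d hd => ?_)
    refine (totalDegree_smul_le _ _).trans ?_
    refine (totalDegree_finset_sum _ _).trans (Finset.sup_le fun i _ => ?_)
    refine (totalDegree_mul _ _).trans ?_
    have h1 : (homogeneousComponent d (w i)).totalDegree ≤ d :=
      (homogeneousComponent_isHomogeneous d (w i)).totalDegree_le
    have h2 : (X i : P).totalDegree = 1 := totalDegree_X i
    rw [Finset.mem_range] at hd
    omega
  · intro j
    have key : ∀ d, ∑ i, X i * pderiv j (homogeneousComponent d (w i))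
        = d • homogeneousComponent d (w j) := by
      intro d
      match d with
      | 0 => simp [pderiv_hc_zero]
      | e + 1 =>
        calc ∑ i, X i * pderiv j (homogeneousComponent (e + 1) (w i))
            = ∑ i, X i * pderiv i (homogeneousComponent (e + 1) (w j)) := by
              refine Finset.sum_congr rfl fun i _ => ?_
              rw [pderiv_hc, pderiv_hc, hcl j i]
          _ = (e + 1) • homogeneousComponent (e + 1) (w j) := euler_hc _ _
    rw [map_sum]
    have step : ∀ d ∈ Finset.range (N + 1),
        pderiv j ((((d : ℝ) + 1)⁻¹) • ∑ i, X i * homogeneousComponent d (w i))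
        = homogeneousComponent d (w j) := by
      intro d _
      rw [Derivation.map_smul, map_sum]
      have expand : ∀ i, pderiv j (X i * homogeneousComponent d (w i))
          = (if i = j then homogeneousComponent d (w j) else 0)
            + X i * pderiv j (homogeneousComponent d (w i)) := by
        intro i
        rw [pderiv_mul]
        congr 1
        rcases eq_or_ne i j with rfl | hij
        · rw [if_pos rfl, pderiv_X_self, one_mul]
        · rw [if_neg hij, pderiv_X_of_ne hij, zero_mul]
      simp_rw [expand]
      rw [Finset.sum_add_distrib, Finset.sum_ite_eq' Finset.univ j
        (fun _ => homogeneousComponent d (w j)), if_pos (Finset.mem_univ j), key d]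
      rw [← Nat.cast_smul_eq_nsmul ℝ]
      rw [show homogeneousComponent d (w j) + (d : ℝ) • homogeneousComponent d (w j)
          = ((d : ℝ) + 1) • homogeneousComponent d (w j) by
        rw [add_smul, one_smul, add_comm]]
      rw [smul_smul, inv_mul_cancel₀ (by positivity), one_smul]
    rw [Finset.sum_congr rfl step]
    exact sum_hc N (w j) (hdeg j)


open MvPolynomial Finset

lemma fm0 (h : 0 < 3) : (⟨0, h⟩ : Fin 3) = 0 := rfl
lemma fm1 (h : 1 < 3) : (⟨1, h⟩ : Fin 3) = 1 := rfl
lemma fm2 (h : 2 < 3) : (⟨2, h⟩ : Fin 3) = 2 := rfl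

lemma c10 (p : P) : pderiv 1 (pderiv 0 p) = pderiv 0 (pderiv 1 p) := pderiv_comm 1 0 p
lemma c20 (p : P) : pderiv 2 (pderiv 0 p) = pderiv 0 (pderiv 2 p) := pderiv_comm 2 0 p
lemma c21 (p : P) : pderiv 2 (pderiv 1 p) = pderiv 1 (pderiv 2 p) := pderiv_comm 2 1 p

lemma deg_sub_le (p q : P) (n : ℕ) (hp : p.totalDegree ≤ n) (hq : q.totalDegree ≤ n) :
    (p - q).totalDegree ≤ n := by
  rw [sub_eq_add_neg]
  refine (totalDegree_add _ _).trans ?_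
  rw [totalDegree_neg]
  exact max_le hp hq

theorem core (k : ℕ) (T : Fin 3 → Fin 3 → P)
    (hdeg : ∀ i j, (T i j).totalDegree ≤ k + 1)
    (hsym : ∀ i j, T i j = T j i)
    (htr : T 0 0 + T 1 1 + T 2 2 = 0)
    (hsc : ∀ i j : Fin 3,
      ((pderiv (j + 1)) (T i (j + 2)) - (pderiv (j + 2)) (T i (j + 1)))
        + ((pderiv (i + 1)) (T j (i + 2)) - (pderiv (i + 2)) (T j (i + 1))) = 0) :
    ∃ U : P, U.totalDegree ≤ k + 3 ∧ ∀ i j, T i j =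
      pderiv i (pderiv j U) - (if i = j then
        C (1/3 : ℝ) * (pderiv 0 (pderiv 0 U) + pderiv 1 (pderiv 1 U) + pderiv 2 (pderiv 2 U))
      else 0) := by
  have hT10 : T 1 0 = T 0 1 := hsym 1 0
  have hT20 : T 2 0 = T 0 2 := hsym 2 0
  have hT21 : T 2 1 = T 1 2 := hsym 2 1
  have S00 : pderiv 1 (T 0 2) - pderiv 2 (T 0 1) = 0 := by
    have h := hsc 0 0
    simp only [show (0 + 1 : Fin 3) = 1 from rfl, show (0 + 2 : Fin 3) = 2 from rfl] at h
    exact add_self_eq_zero.mp h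
  have S11 : pderiv 2 (T 0 1) - pderiv 0 (T 1 2) = 0 := by
    have h := hsc 1 1
    simp only [show (1 + 1 : Fin 3) = 2 from rfl, show (1 + 2 : Fin 3) = 0 from rfl, hT10] at h
    exact add_self_eq_zero.mp h
  have S22 : pderiv 0 (T 1 2) - pderiv 1 (T 0 2) = 0 := by
    have h := hsc 2 2
    simp only [show (2 + 1 : Fin 3) = 0 from rfl, show (2 + 2 : Fin 3) = 1 from rfl, hT21,
      hT20] at h
    exact add_self_eq_zero.mp h
  have S01 : (pderiv 2 (T 0 0) - pderiv 0 (T 0 2)) + (pderiv 1 (T 1 2) - pderiv 2 (T 1 1)) = 0 := by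
    have h := hsc 0 1
    simpa only [show (0 + 1 : Fin 3) = 1 from rfl, show (0 + 2 : Fin 3) = 2 from rfl,
      show (1 + 1 : Fin 3) = 2 from rfl, show (1 + 2 : Fin 3) = 0 from rfl, hT10] using h
  have S02 : (pderiv 0 (T 0 1) - pderiv 1 (T 0 0)) + (pderiv 1 (T 2 2) - pderiv 2 (T 1 2)) = 0 := by
    have h := hsc 0 2
    simpa only [show (0 + 1 : Fin 3) = 1 from rfl, show (0 + 2 : Fin 3) = 2 from rfl,
      show (2 + 1 : Fin 3) = 0 from rfl, show (2 + 2 : Fin 3) = 1 from rfl, hT21, hT20] using h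
  have S12 : (pderiv 0 (T 1 1) - pderiv 1 (T 0 1)) + (pderiv 2 (T 0 2) - pderiv 0 (T 2 2)) = 0 := by
    have h := hsc 1 2
    simpa only [show (1 + 1 : Fin 3) = 2 from rfl, show (1 + 2 : Fin 3) = 0 from rfl,
      show (2 + 1 : Fin 3) = 0 from rfl, show (2 + 2 : Fin 3) = 1 from rfl, hT21, hT20,
      hT10] using h
  -- curl w = 0 where w = (CT 2 1, CT 0 2, CT 1 0)
  have hwdeg : ∀ i, ((![pderiv 2 (T 0 2) - pderiv 0 (T 2 2), pderiv 0 (T 0 1) - pderiv 1 (T 0 0),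
      pderiv 1 (T 1 2) - pderiv 2 (T 1 1)]) i).totalDegree ≤ k := by
    intro i
    fin_cases i <;>
      exact deg_sub_le _ _ _ (totalDegree_pderiv_le _ _ (hdeg _ _))
        (totalDegree_pderiv_le _ _ (hdeg _ _))
  have hwcl : ∀ i j, pderiv i ((![pderiv 2 (T 0 2) - pderiv 0 (T 2 2),
      pderiv 0 (T 0 1) - pderiv 1 (T 0 0), pderiv 1 (T 1 2) - pderiv 2 (T 1 1)]) j)
      = pderiv j ((![pderiv 2 (T 0 2) - pderiv 0 (T 2 2), pderiv 0 (T 0 1) - pderiv 1 (T 0 0),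
      pderiv 1 (T 1 2) - pderiv 2 (T 1 1)]) i) := by
    have dS02_0 := congrArg (pderiv 0) S02
    have dS22_2 := congrArg (pderiv 2) S22
    have dS12_2 := congrArg (pderiv 2) S12
    have dS11_1 := congrArg (pderiv 1) S11
    have dS01_1 := congrArg (pderiv 1) S01
    have dS00_0 := congrArg (pderiv 0) S00
    simp only [map_add, map_sub, map_zero, c10, c20, c21] at dS02_0
    simp only [map_add, map_sub, map_zero, c10, c20, c21] at dS22_2
    simp only [map_add, map_sub, map_zero, c10, c20, c21] at dS12_2
    simp only [map_add, map_sub, map_zero, c10, c20, c21] at dS11_1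
    simp only [map_add, map_sub, map_zero, c10, c20, c21] at dS01_1
    simp only [map_add, map_sub, map_zero, c10, c20, c21] at dS00_0
    intro i j
    fin_cases i <;> fin_cases j <;>
        simp only [fm0, fm1, fm2, Matrix.cons_val_zero, Matrix.cons_val_one, Matrix.head_cons,
          Matrix.cons_val_two, Matrix.tail_cons, map_sub] <;>
        (try simp only [c10, c20, c21])
    · linear_combination dS02_0 + dS22_2
    · linear_combination -dS12_2 - dS11_1
    · linear_combination -dS02_0 - dS22_2
    · linear_combination dS01_1 + dS00_0
    · linear_combination dS12_2 + dS11_1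
    · linear_combination -dS01_1 - dS00_0
  obtain ⟨q, hqdeg, hq⟩ := poincare _ hwdeg hwcl
  have hq0 : pderiv 0 q = pderiv 2 (T 0 2) - pderiv 0 (T 2 2) := by simpa using hq 0
  have hq1 : pderiv 1 q = pderiv 0 (T 0 1) - pderiv 1 (T 0 0) := by simpa using hq 1
  have hq2 : pderiv 2 q = pderiv 1 (T 1 2) - pderiv 2 (T 1 1) := by simpa using hq 2
  -- each row of T + q I is closed, integrate rows
  have hrcl : ∀ i a b : Fin 3, pderiv a (T i b + (if i = b then q else 0))
      = pderiv b (T i a + (if i = a then q else 0)) := by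
    intro i a b
    fin_cases i <;> fin_cases a <;> fin_cases b <;>
        simp only [fm0, fm1, fm2, hT10, hT20, hT21, map_add, map_sub, if_true, if_false,
          show ((0:Fin 3) = 1) = False from by simp, show ((0:Fin 3) = 2) = False from by simp,
          show ((1:Fin 3) = 0) = False from by simp, show ((1:Fin 3) = 2) = False from by simp,
          show ((2:Fin 3) = 0) = False from by simp, show ((2:Fin 3) = 1) = False from by simp,
          show ((0:Fin 3) = 0) = True from by simp, show ((1:Fin 3) = 1) = True from by simp,
          show ((2:Fin 3) = 2) = True from by simp, map_zero, add_zero] <;>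
      (try simp only [c10, c20, c21])
    · linear_combination -hq1
    · linear_combination -S01 - hq2
    · linear_combination hq1
    · linear_combination S00
    · linear_combination S01 + hq2
    · linear_combination -S00
    · linear_combination S12 + hq0
    · linear_combination -S11
    · linear_combination -S12 - hq0
    · linear_combination -hq2
    · linear_combination S11
    · linear_combination hq2
    · linear_combination S22
    · linear_combination hq0
    · linear_combination -S22
    · linear_combination S02 + hq1
    · linear_combination -hq0
    · linear_combination -S02 - hq1
  have hv : ∀ i : Fin 3, ∃ v : P, v.totalDegree ≤ (k + 1) + 1
      ∧ ∀ j, pderiv j v = T i j + (if i = j then q else 0) := by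
    intro i
    refine poincare (fun j => T i j + (if i = j then q else 0)) (fun j => ?_) (fun a b => hrcl i a b)
    refine (totalDegree_add _ _).trans (max_le (hdeg i j) ?_)
    split_ifs
    · exact hqdeg
    · simp
  choose v hvdeg hvd using hv
  have hvcl : ∀ a b, pderiv a (v b) = pderiv b (v a) := by
    intro a b
    rw [hvd b a, hvd a b, hsym b a]
    congr 1
    simp only [eq_comm]
  obtain ⟨U, hUdeg, hU⟩ := poincare v hvdeg hvcl
  have hhess : ∀ i j, pderiv i (pderiv j U) = T j i + (if j = i then q else 0) := by
    intro i j
    rw [hU j]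
    exact hvd j i
  have hC3 : (C (3:ℝ) : P) = 3 := map_ofNat _ 3
  have h13 : C (1/3 : ℝ) * (q + q + q) = q := by
    rw [show (q + q + q : P) = C (3:ℝ) * q from by rw [hC3]; ring, ← mul_assoc, ← C_mul]
    norm_num
  have hlap : pderiv 0 (pderiv 0 U) + pderiv 1 (pderiv 1 U) + pderiv 2 (pderiv 2 U)
      = q + q + q := by
    rw [hhess 0 0, hhess 1 1, hhess 2 2, if_pos rfl, if_pos rfl, if_pos rfl]
    linear_combination htr
  refine ⟨U, by omega, ?_⟩
  intro i j
  rcases eq_or_ne i j with rfl | h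
  · rw [hhess i i, if_pos rfl, if_pos rfl, hlap, h13]
    ring
  · rw [hhess i j, if_neg (Ne.symm h), if_neg h, hsym i j]
    ring


open MvPolynomial

lemma hasFDerivAt_eval (p : P) (x : V3) :
    HasFDerivAt (fun y : V3 => eval y p)
      (∑ i, eval x (pderiv i p) • (ContinuousLinearMap.proj i : V3 →L[ℝ] ℝ)) x := by
  induction p using MvPolynomial.induction_on with
  | C a =>
    have h0 : (∑ i, eval x (pderiv i (C a : P)) • (ContinuousLinearMap.proj i : V3 →L[ℝ] ℝ))
        = 0 := by
      simp [pderiv_C]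
    rw [h0]
    simpa [eval_C] using hasFDerivAt_const (a : ℝ) x
  | add p q hp hq =>
    have heq : (∑ i, eval x (pderiv i (p + q)) • (ContinuousLinearMap.proj i : V3 →L[ℝ] ℝ))
        = (∑ i, eval x (pderiv i p) • (ContinuousLinearMap.proj i : V3 →L[ℝ] ℝ))
          + ∑ i, eval x (pderiv i q) • (ContinuousLinearMap.proj i : V3 →L[ℝ] ℝ) := by
      rw [← Finset.sum_add_distrib]
      refine Finset.sum_congr rfl fun i _ => ?_
      rw [map_add, map_add, add_smul]
    rw [heq]
    simp only [map_add]
    exact hp.add hq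
  | mul_X p i hp =>
    have hXi : HasFDerivAt (fun y : V3 => y i) (ContinuousLinearMap.proj i : V3 →L[ℝ] ℝ) x :=
      (ContinuousLinearMap.proj (R := ℝ) (φ := fun _ : Fin 3 => ℝ) i).hasFDerivAt
    simp only [_root_.map_mul, eval_X]
    refine (hp.mul hXi).congr_fderiv ?_
    refine (ContinuousLinearMap.ext fun v => ?_).symm
    simp only [ContinuousLinearMap.sum_apply, ContinuousLinearMap.smul_apply,
      ContinuousLinearMap.add_apply, ContinuousLinearMap.proj_apply, smul_eq_mul,
      pderiv_mul, map_add, _root_.map_mul, eval_X, pderiv_X]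
    fin_cases i <;>
      simp [Fin.sum_univ_three, Pi.single_apply] <;> ring

lemma pd_eval (a : Fin 3) (p : P) (f : V3 → ℝ) (hf : ∀ y, f y = eval y p) (x : V3) :
    pd a f x = eval x (pderiv a p) := by
  have hfe : f = fun y => eval y p := funext hf
  unfold pd
  rw [hfe, (hasFDerivAt_eval p x).fderiv]
  simp only [ContinuousLinearMap.sum_apply, ContinuousLinearMap.smul_apply,
    ContinuousLinearMap.proj_apply, smul_eq_mul, Pi.single_apply]
  simp [Finset.sum_ite_eq', mul_ite]



def LapP (U : P) : P :=
  pderiv 0 (pderiv 0 U) + pderiv 1 (pderiv 1 U) + pderiv 2 (pderiv 2 U)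

def QP (U : P) (i j : Fin 3) : P :=
  pderiv i (pderiv j U) - (if i = j then C (1/3 : ℝ) * LapP U else 0)

lemma mcurl_eval (τ : V3 → M3) (T : Fin 3 → Fin 3 → P)
    (hT : ∀ x i j, τ x i j = eval x (T i j)) (x : V3) (i j : Fin 3) :
    mcurl τ x i j
      = eval x (pderiv (j + 1) (T i (j + 2)) - pderiv (j + 2) (T i (j + 1))) := by
  show pd (j + 1) (fun y => τ y i (j + 2)) x - pd (j + 2) (fun y => τ y i (j + 1)) x = _
  rw [map_sub, pd_eval (j + 1) (T i (j + 2)) _ (fun y => hT y i (j + 2)) x,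
    pd_eval (j + 2) (T i (j + 1)) _ (fun y => hT y i (j + 1)) x]

lemma hess_eval (u : V3 → ℝ) (U : P) (hu : ∀ y, u y = eval y U) (x : V3) (i j : Fin 3) :
    hess u x i j = eval x (pderiv i (pderiv j U)) := by
  show pd i (pd j u) x = _
  exact pd_eval i (pderiv j U) (pd j u) (fun y => pd_eval j U u hu y) x

lemma devm_hess_eval (u : V3 → ℝ) (U : P) (hu : ∀ y, u y = eval y U) (x : V3) (i j : Fin 3) :
    devm (hess u x) i j = eval x (QP U i j) := by
  have htr : (hess u x).trace = eval x (LapP U) := by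
    rw [Matrix.trace_fin_three, hess_eval u U hu x 0 0, hess_eval u U hu x 1 1,
      hess_eval u U hu x 2 2, LapP, map_add, map_add]
  show hess u x i j - ((1 / 3 : ℝ) * (hess u x).trace) • (1 : M3) i j = _
  rw [QP, map_sub, hess_eval u U hu x i j, htr, Matrix.one_apply, smul_eq_mul]
  rcases eq_or_ne i j with rfl | h
  · rw [if_pos rfl, if_pos rfl, eval_mul, eval_C]
    ring
  · rw [if_neg h, if_neg h, map_zero, mul_zero]

lemma skew_curl_devhess (U : P) (i j : Fin 3) :
    (pderiv (j + 1) (QP U i (j + 2)) - pderiv (j + 2) (QP U i (j + 1)))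
      + (pderiv (i + 1) (QP U j (i + 2)) - pderiv (i + 2) (QP U j (i + 1))) = 0 := by
  fin_cases i <;> fin_cases j <;>
      simp only [fm0, fm1, fm2, QP, LapP,
        show (0 + 1 : Fin 3) = 1 from rfl, show (0 + 2 : Fin 3) = 2 from rfl,
        show (1 + 1 : Fin 3) = 2 from rfl, show (1 + 2 : Fin 3) = 0 from rfl,
        show (2 + 1 : Fin 3) = 0 from rfl, show (2 + 2 : Fin 3) = 1 from rfl,
        show ((0:Fin 3) = 1) = False from by simp, show ((0:Fin 3) = 2) = False from by simp,
        show ((1:Fin 3) = 0) = False from by simp, show ((1:Fin 3) = 2) = False from by simp,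
        show ((2:Fin 3) = 0) = False from by simp, show ((2:Fin 3) = 1) = False from by simp,
        show ((0:Fin 3) = 0) = True from by simp, show ((1:Fin 3) = 1) = True from by simp,
        show ((2:Fin 3) = 2) = True from by simp, if_true, if_false, sub_zero,
        map_sub, map_add, pderiv_C_mul, map_zero] <;>
    (try simp only [c10, c20, c21]) <;> ring

end PCH

open MvPolynomial

/-- exactness of the polynomial conformal Hessian complex at the sym curl stage. -/
theorem poly_conformal_hessian_exact_symcurl (k : ℕ) (τ : V3 → M3) (hτ : PolyLeST (k + 1) τ) :
    (∀ x, msym (mcurl τ x) = 0) ↔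
      ∃ u : V3 → ℝ, PolyLe (k + 3) u ∧ ∀ x, τ x = devm (hess u x) := by
  classical
  obtain ⟨hpoly, hsymf, htrf⟩ := hτ
  choose T hTdeg hTev using hpoly
  have hTev' : ∀ x i j, τ x i j = eval x (T i j) := fun x i j => hTev i j x
  constructor
  · intro h
    have hsc : ∀ i j : Fin 3,
        (pderiv (j + 1) (T i (j + 2)) - pderiv (j + 2) (T i (j + 1)))
          + (pderiv (i + 1) (T j (i + 2)) - pderiv (i + 2) (T j (i + 1))) = 0 := by
      intro i j
      apply MvPolynomial.funext
      intro x
      rw [map_add, ← PCH.mcurl_eval τ T hTev' x i j, ← PCH.mcurl_eval τ T hTev' x j i, map_zero]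
      have h2 := congrFun (congrFun (h x) i) j
      have h3 : (1 / 2 : ℝ) * (mcurl τ x i j + mcurl τ x j i) = 0 := by
        simpa [msym, Matrix.add_apply, Matrix.transpose_apply, smul_eq_mul] using h2
      linarith
    have hsymP : ∀ i j, T i j = T j i := by
      intro i j
      apply MvPolynomial.funext
      intro x
      rw [← hTev' x i j, ← hTev' x j i]
      exact (congrFun (congrFun (hsymf x) i) j).symm
    have htrP : T 0 0 + T 1 1 + T 2 2 = 0 := by
      apply MvPolynomial.funext
      intro x
      rw [map_add, map_add, map_zero, ← hTev' x 0 0, ← hTev' x 1 1, ← hTev' x 2 2]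
      have h4 := htrf x
      rwa [Matrix.trace_fin_three] at h4
    obtain ⟨U, hUdeg, hUT⟩ := PCH.core k T hTdeg hsymP htrP hsc
    refine ⟨fun x => eval x U, ⟨U, hUdeg, fun _ => rfl⟩, fun x => ?_⟩
    ext i j
    rw [PCH.devm_hess_eval (fun y => eval y U) U (fun _ => rfl) x i j, hTev' x i j, hUT i j]
    rfl
  · rintro ⟨u, ⟨U, hUdeg, hU⟩, hdev⟩
    intro x
    have hQev : ∀ y i j, τ y i j = eval y (PCH.QP U i j) := by
      intro y i j
      rw [hdev y]
      exact PCH.devm_hess_eval u U hU y i j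
    have hm : ∀ i j, mcurl τ x i j
        = eval x (pderiv (j + 1) (PCH.QP U i (j + 2)) - pderiv (j + 2) (PCH.QP U i (j + 1))) :=
      fun i j => PCH.mcurl_eval τ (PCH.QP U) hQev x i j
    ext i j
    simp only [msym, Matrix.smul_apply, Matrix.add_apply, Matrix.transpose_apply,
      Matrix.zero_apply, smul_eq_mul]
    rw [hm i j, hm j i, ← map_add, PCH.skew_curl_devhess U i j, map_zero, mul_zero]

end
end
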